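/- arXiv:1310.1520 — 7 statements merged into one kernel-verified Lean document; each statement's English description precedes it below -/
import Mathlib

section
/- The number of 312-avoiding indecomposable permutations in the symmetric group S_n is the Catalan number C_{n-1}. -/
/-- A permutation `π ∈ S_n` avoids the pattern 312 if there are no indices
`i < j < k` with `π j < π k < π i`. -/
def Avoids312 {n : ℕ} (π : Equiv.Perm (Fin n)) : Prop :=
  ¬ ∃ i j k : Fin n, i < j ∧ j < k ∧ π j < π k ∧ π k < π i

/-- `j` is a cut point of `π` (0-indexed): `j` is not the last position, and every
letter in positions `≤ j` is smaller than every letter in positions `> j`.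
This corresponds to the paper's cut points `1 ≤ j ≤ n - 1` (1-indexed). -/
def IsCutPoint {n : ℕ} (π : Equiv.Perm (Fin n)) (j : Fin n) : Prop :=
  (j : ℕ) + 1 < n ∧ ∀ i k : Fin n, i ≤ j → j < k → π i < π k

/-- A permutation is indecomposable if it has no cut point. -/
def Indecomposable {n : ℕ} (π : Equiv.Perm (Fin n)) : Prop :=
  ¬ ∃ j : Fin n, IsCutPoint π j

/-! In a 312-avoiding permutation every entry to the left of the minimum is smaller than every
entry to its right, since otherwise the two together with the minimum form a 312. Hence such a
permutation is `σ`, shifted up by one, followed by the minimum, followed by `τ`, shifted above `σ`,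
with `σ` and `τ` again 312-avoiding; this gives the Catalan recurrence. The position of the minimum
is a cut point unless it is the last position, so the indecomposable ones are exactly those with
`τ` empty, and there are `C_{n-1}` of them. -/

open Equiv

namespace Equiv.Perm

variable {n : ℕ} (π : Perm (Fin n))

theorem apply_le_of_forall_lt_apply {i j : Fin n} (h : ∀ k, j < k → π i < π k) : π i ≤ j := by
  have := Finset.card_le_card_of_injOn π (s := Finset.Ioi j) (t := Finset.Ioi (π i))
    (fun k hk => by simpa using h k (by simpa using hk)) π.injective.injOn
  simp only [Fin.card_Ioi] at this
  omega

theorem lt_apply_of_forall_apply_lt {j k : Fin n} (h : ∀ i, i ≤ j → π i < π k) : j < π k := by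
  have := Finset.card_le_card_of_injOn π (s := Finset.Iic j) (t := Finset.Iio (π k))
    (fun i hi => by simpa using h i (by simpa using hi)) π.injective.injOn
  simp only [Fin.card_Iic, Fin.card_Iio] at this
  omega

end Equiv.Perm

theorem Avoids312.apply_lt_apply_of_le_of_lt {n : ℕ} [NeZero n] {π : Perm (Fin n)}
    (hπ : Avoids312 π) {a i k : Fin n} (ha : π a = 0) (hi : i ≤ a) (hk : a < k) : π i < π k := by
  have hk0 : π k ≠ 0 := fun h => hk.ne (π.injective (ha.trans h.symm))
  rcases hi.lt_or_eq with hi | rfl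
  · by_contra! h
    have hne : π k ≠ π i := fun h => (hi.trans hk).ne' (π.injective h)
    exact hπ ⟨i, a, k, hi, hk, ha ▸ Fin.pos_iff_ne_zero.mpr hk0, h.lt_of_ne hne⟩
  · exact ha ▸ Fin.pos_iff_ne_zero.mpr hk0

def IsBlock {m n : ℕ} (π : Perm (Fin n)) (σ : Perm (Fin m)) (s t : ℕ) : Prop :=
  ∀ (p : Fin m) (q : Fin n), (q : ℕ) = s + p → (π q : ℕ) = t + σ p

namespace IsBlock

variable {m n s t : ℕ} {π : Perm (Fin n)} {σ : Perm (Fin m)}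

theorem val_apply (h : IsBlock π σ s t) {q : Fin n} (hs : s ≤ q) (hq : q < s + m) :
    (π q : ℕ) = t + σ ⟨q - s, by omega⟩ :=
  h _ q (by simp only; omega)

theorem unique {σ' : Perm (Fin m)} (h : IsBlock π σ s t) (h' : IsBlock π σ' s t)
    (hn : s + m ≤ n) : σ = σ' := by
  ext p
  have := h p ⟨s + p, by omega⟩ rfl
  have := h' p ⟨s + p, by omega⟩ rfl
  omega

theorem _root_.exists_isBlock (hn : s + m ≤ n)
    (hπ : ∀ q : Fin n, s ≤ q → q < s + m → t ≤ π q ∧ π q < t + m) :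
    ∃ σ : Perm (Fin m), IsBlock π σ s t := by
  let f (p : Fin m) : Fin m :=
    ⟨π ⟨s + p, by omega⟩ - t, by have := hπ ⟨s + p, by omega⟩ (by simp) (by simp); omega⟩
  have hf : Function.Injective f := fun p p' hpp' => by
    have := hπ ⟨s + p, by omega⟩ (by simp) (by simp)
    have := hπ ⟨s + p', by omega⟩ (by simp) (by simp)
    have hv := Fin.val_eq_of_eq hpp'
    simp only [f] at hv
    have := Fin.val_eq_of_eq
      (π.injective (Fin.ext (by omega : (π ⟨s + p, _⟩ : ℕ) = π ⟨s + p', _⟩)))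
    simp only at this
    exact Fin.ext (by omega)
  refine ⟨Equiv.ofBijective f (Finite.injective_iff_bijective.mp hf), fun p q hq => ?_⟩
  have := hπ q (by omega) (by omega)
  simp only [ofBijective_apply, ← hq, Fin.eta, f]
  omega

theorem avoids312 (h : IsBlock π σ s t) (hn : s + m ≤ n) (hπ : Avoids312 π) : Avoids312 σ := by
  rintro ⟨i, j, k, hij, hjk, hjk', hki'⟩
  have := h i ⟨s + i, by omega⟩ rfl
  have := h j ⟨s + j, by omega⟩ rfl
  have := h k ⟨s + k, by omega⟩ rfl
  exact hπ ⟨⟨s + i, by omega⟩, ⟨s + j, by omega⟩, ⟨s + k, by omega⟩,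
    Fin.mk_lt_mk.mpr (by omega), Fin.mk_lt_mk.mpr (by omega), by omega, by omega⟩

theorem not_lt_of_avoids312 (h : IsBlock π σ s t) (hσ : Avoids312 σ) {i j k : Fin n}
    (hi : s ≤ i) (hk : k < s + m) (hij : i < j) (hjk : j < k) (hjk' : π j < π k) :
    ¬ π k < π i := by
  intro hki
  have := h.val_apply hi (by omega)
  have := h.val_apply (q := j) (by omega) (by omega)
  have := h.val_apply (by omega) hk
  exact hσ ⟨⟨i - s, by omega⟩, ⟨j - s, by omega⟩, ⟨k - s, by omega⟩,
    Fin.mk_lt_mk.mpr (by omega), Fin.mk_lt_mk.mpr (by omega), by omega, by omega⟩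

end IsBlock

section Glue

variable {a b : ℕ}

/-- The one-line notation of `glue σ τ` is `σ + 1`, then `0`, then `τ + (a + 1)`: the block
permutation `σ ⊕ 1 ⊕ τ` followed by the cycle sending `a` to `0` and `p < a` to `p + 1`. -/
def glue (σ : Perm (Fin a)) (τ : Perm (Fin b)) : Perm (Fin (a + 1 + b)) :=
  Fin.cycleRange (Fin.castAdd b (Fin.last a)) *
    finSumFinEquiv.permCongr ((finSumFinEquiv.permCongr (σ.sumCongr 1)).sumCongr τ)

variable (σ : Perm (Fin a)) (τ : Perm (Fin b))

theorem isBlock_glue_left : IsBlock (glue σ τ) σ 0 1 := by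
  intro p q hq
  obtain rfl : q = Fin.castAdd b (Fin.castAdd 1 p) := Fin.ext (by simp [hq])
  simp only [glue, Perm.mul_apply, permCongr_apply, finSumFinEquiv_symm_apply_castAdd,
    Perm.sumCongr_apply, Sum.map_inl, finSumFinEquiv_apply_left]
  rw [Fin.coe_cycleRange_of_lt (by simp [Fin.lt_def]), add_comm]
  rfl

theorem glue_apply_mid : glue σ τ ⟨a, by omega⟩ = 0 := by
  have : (⟨a, by omega⟩ : Fin (a + 1 + b)) = Fin.castAdd b (Fin.natAdd a (0 : Fin 1)) := rfl
  simp only [this, glue, Perm.mul_apply, permCongr_apply, finSumFinEquiv_symm_apply_castAdd,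
    finSumFinEquiv_symm_apply_natAdd, Perm.sumCongr_apply, Sum.map_inl, Sum.map_inr,
    finSumFinEquiv_apply_left, finSumFinEquiv_apply_right, Perm.one_apply]
  exact Fin.cycleRange_of_eq rfl

theorem isBlock_glue_right : IsBlock (glue σ τ) τ (a + 1) (a + 1) := by
  intro p q hq
  obtain rfl : q = Fin.natAdd (a + 1) p := Fin.ext (by simp [hq])
  simp only [glue, Perm.mul_apply, permCongr_apply, finSumFinEquiv_symm_apply_natAdd,
    Perm.sumCongr_apply, Sum.map_inr, finSumFinEquiv_apply_right]
  rw [Fin.cycleRange_of_gt (by simp [Fin.lt_def]; omega)]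
  rfl

theorem glue_symm_zero : ((glue σ τ).symm 0 : ℕ) = a := by
  rw [(glue σ τ).symm_apply_eq.mpr (glue_apply_mid σ τ).symm]

theorem glue_apply_lt_apply {i k : Fin (a + 1 + b)} (hi : (i : ℕ) ≤ a) (hk : a < (k : ℕ)) :
    glue σ τ i < glue σ τ k := by
  have hk' := (isBlock_glue_right σ τ).val_apply hk (by omega)
  rcases hi.lt_or_eq with hi | hi
  · have := (isBlock_glue_left σ τ).val_apply (Nat.zero_le _) (by omega : (i : ℕ) < 0 + a)
    omega
  · rw [show i = ⟨a, by omega⟩ from Fin.ext hi, glue_apply_mid, Fin.lt_def, Fin.val_zero]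
    omega

theorem avoids312_glue_iff : Avoids312 (glue σ τ) ↔ Avoids312 σ ∧ Avoids312 τ := by
  refine ⟨fun h => ⟨(isBlock_glue_left σ τ).avoids312 (by omega) h,
    (isBlock_glue_right σ τ).avoids312 (by omega) h⟩, ?_⟩
  rintro ⟨hσ, hτ⟩ ⟨i, j, k, hij, hjk, hjk', hki⟩
  rcases lt_trichotomy (k : ℕ) a with hka | hka | hka
  · exact (isBlock_glue_left σ τ).not_lt_of_avoids312 hσ (Nat.zero_le _) (by omega)
      hij hjk hjk' hki
  · rw [show k = ⟨a, by omega⟩ from Fin.ext hka, glue_apply_mid] at hjk'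
    exact Fin.not_lt_zero _ hjk'
  · by_cases hia : (i : ℕ) ≤ a
    · exact (glue_apply_lt_apply σ τ hia hka).not_gt hki
    · exact (isBlock_glue_right σ τ).not_lt_of_avoids312 hτ (by omega) (by omega)
        hij hjk hjk' hki

end Glue

theorem glue_inj {a b : ℕ} {σ σ' : Perm (Fin a)} {τ τ' : Perm (Fin b)} :
    glue σ τ = glue σ' τ' ↔ σ = σ' ∧ τ = τ' := by
  refine ⟨fun h => ⟨?_, ?_⟩, fun ⟨hσ, hτ⟩ => hσ ▸ hτ ▸ rfl⟩
  · exact (isBlock_glue_left σ τ).unique (h ▸ isBlock_glue_left σ' τ') (by omega)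
  · exact (isBlock_glue_right σ τ).unique (h ▸ isBlock_glue_right σ' τ') (by omega)

theorem eq_glue_of_isBlock {a b : ℕ} {π : Perm (Fin (a + 1 + b))} {σ : Perm (Fin a)}
    {τ : Perm (Fin b)} (hσ : IsBlock π σ 0 1) (hmid : π ⟨a, by omega⟩ = 0)
    (hτ : IsBlock π τ (a + 1) (a + 1)) : π = glue σ τ := by
  ext q
  rcases lt_trichotomy (q : ℕ) a with hq | hq | hq
  · rw [hσ.val_apply (Nat.zero_le _) (by omega),
      (isBlock_glue_left σ τ).val_apply (Nat.zero_le _) (by omega)]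
  · rw [show q = ⟨a, by omega⟩ from Fin.ext hq, hmid, glue_apply_mid]
  · rw [hτ.val_apply hq (by omega), (isBlock_glue_right σ τ).val_apply hq (by omega)]

theorem Avoids312.exists_eq_glue {a b : ℕ} {π : Perm (Fin (a + 1 + b))} (hπ : Avoids312 π)
    (ha : (π.symm 0 : ℕ) = a) : ∃ σ τ, π = glue σ τ := by
  have hcut {i k} : i ≤ π.symm 0 → π.symm 0 < k → π i < π k :=
    Avoids312.apply_lt_apply_of_le_of_lt hπ (π.apply_symm_apply 0)
  have hmid : π ⟨a, by omega⟩ = 0 := by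
    rw [← π.apply_symm_apply 0]
    exact congrArg π (Fin.ext ha.symm)
  obtain ⟨σ, hσ⟩ := exists_isBlock (π := π) (s := 0) (t := 1) (m := a) (by omega) fun q _ hq => by
    have hle := π.apply_le_of_forall_lt_apply fun k => hcut (i := q) (by omega)
    have hne : π q ≠ 0 := fun h => by
      have := congrArg Fin.val (π.injective (h.trans hmid.symm))
      simp only at this
      omega
    have := Fin.pos_iff_ne_zero.mpr hne
    omega
  obtain ⟨τ, hτ⟩ := exists_isBlock (π := π) (s := a + 1) (t := a + 1) (m := b) (by omega)
    fun q hq _ => by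
      have := π.lt_apply_of_forall_apply_lt fun i hi => hcut (k := q) hi (by omega)
      omega
  exact ⟨σ, τ, eq_glue_of_isBlock hσ hmid hτ⟩

theorem card_avoids312_symm_zero_eq {n a b : ℕ} [NeZero n] (h : a + 1 + b = n) :
    Nat.card {π : Perm (Fin n) // Avoids312 π ∧ (π.symm 0 : ℕ) = a} =
      Nat.card {σ : Perm (Fin a) // Avoids312 σ} * Nat.card {τ : Perm (Fin b) // Avoids312 τ} := by
  subst h
  rw [← Nat.card_prod]
  let f (x : {σ : Perm (Fin a) // Avoids312 σ} × {τ : Perm (Fin b) // Avoids312 τ}) :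
      {π : Perm (Fin (a + 1 + b)) // Avoids312 π ∧ (π.symm 0 : ℕ) = a} :=
    ⟨glue x.1.1 x.2.1, (avoids312_glue_iff _ _).mpr ⟨x.1.2, x.2.2⟩, glue_symm_zero _ _⟩
  refine (Nat.card_eq_of_bijective f ⟨fun x y hxy => ?_, fun ⟨π, hπ, ha⟩ => ?_⟩).symm
  · obtain ⟨hσ, hτ⟩ := glue_inj.mp (congrArg Subtype.val hxy)
    exact Prod.ext (Subtype.ext hσ) (Subtype.ext hτ)
  · obtain ⟨σ, τ, rfl⟩ := Avoids312.exists_eq_glue hπ ha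
    have := (avoids312_glue_iff σ τ).mp hπ
    exact ⟨⟨⟨σ, this.1⟩, ⟨τ, this.2⟩⟩, rfl⟩

theorem card_avoids312 (n : ℕ) : Nat.card {π : Perm (Fin n) // Avoids312 π} = catalan n := by
  induction n using Nat.strong_induction_on with
  | _ n ih =>
    rcases n with _ | k
    · rw [catalan_zero, Nat.card_eq_one_iff_unique]
      exact ⟨inferInstance, ⟨⟨1, fun ⟨i, _⟩ => i.elim0⟩⟩⟩
    have fiber (i : Fin (k + 1)) :
        {π : {π : Perm (Fin (k + 1)) // Avoids312 π} // π.1.symm 0 = i} ≃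
          {π : Perm (Fin (k + 1)) // Avoids312 π ∧ (π.symm 0 : ℕ) = i} :=
      (Equiv.subtypeSubtypeEquivSubtypeInter Avoids312 (fun π => π.symm 0 = i)).trans
        (Equiv.subtypeEquivRight fun _ => and_congr_right' Fin.ext_iff)
    calc Nat.card {π : Perm (Fin (k + 1)) // Avoids312 π}
        = ∑ i : Fin (k + 1),
            Nat.card {π : Perm (Fin (k + 1)) // Avoids312 π ∧ (π.symm 0 : ℕ) = i} := by
          rw [← Nat.card_sigma]
          exact Nat.card_congr ((Equiv.sigmaFiberEquiv fun π => π.1.symm 0).symm.trans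
            (Equiv.sigmaCongrRight fiber))
      _ = ∑ i : Fin (k + 1), catalan i * catalan (k - i) := by
          refine Finset.sum_congr rfl fun i _ => ?_
          rw [card_avoids312_symm_zero_eq (b := k - i) (by omega), ih _ (by omega), ih _ (by omega)]
      _ = catalan (k + 1) := (catalan_succ k).symm

theorem Avoids312.indecomposable_iff {n : ℕ} [NeZero n] {π : Perm (Fin n)} (hπ : Avoids312 π) :
    Indecomposable π ↔ (π.symm 0 : ℕ) + 1 = n := by
  constructor
  · intro h
    by_contra hlast
    exact h ⟨π.symm 0, by omega, fun i k =>
      Avoids312.apply_lt_apply_of_le_of_lt hπ (π.apply_symm_apply 0)⟩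
  · rintro hlast ⟨j, hj, hcut⟩
    have := hcut j (π.symm 0) le_rfl (by omega)
    simp at this

/-- The number of 312-avoiding indecomposable permutations in `S_n` is the
Catalan number `C_{n-1}`. -/
theorem number_of_312_avoiding_indecomposable (n : ℕ) (hn : 1 ≤ n) :
    Nat.card {π : Equiv.Perm (Fin n) // Avoids312 π ∧ Indecomposable π} = catalan (n - 1) := by
  obtain ⟨m, rfl⟩ : ∃ m, n = m + 1 := ⟨n - 1, by omega⟩
  have hlast : {π : Perm (Fin (m + 1)) // Avoids312 π ∧ Indecomposable π} ≃
      {π : Perm (Fin (m + 1)) // Avoids312 π ∧ (π.symm 0 : ℕ) = m} :=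
    Equiv.subtypeEquivRight fun π => and_congr_right fun hπ =>
      (Avoids312.indecomposable_iff hπ).trans (by omega)
  rw [Nat.card_congr hlast, card_avoids312_symm_zero_eq (b := 0) rfl, card_avoids312,
    card_avoids312, catalan_zero, mul_one, Nat.add_sub_cancel]
end

section
/- Let (α_i)_{i≥1} be a sequence in a commutative ring, let f(t) = Σ_{i≥1} α_i t^i as a formal power series, and for d ≥ k ≥ 1 let γ_{d,k} = Σ_{𝒫} α_{a_1}·α_{a_2}⋯α_{a_k}, the sum over all cyclic compositions 𝒫 of d into k parts with part sizes a_1,…,a_k. Then Σ_{d≥k} γ_{d,k} t^d = t·f′(t)·f(t)^{k−1} as formal power series. -/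
/-- A cyclic composition of `d` into `k` parts is a partition of the vertex set of the
labeled cycle `ℤ/d` into blocks inducing paths; equivalently it is obtained by deleting
a nonempty set `S` of the `d` edges of the cycle (we identify the edge `{s, s+1}` with
its left endpoint `s`, so `S` is a `Finset (ZMod d)`).  The block that starts right
after the deleted edge `s` has size `cycGap d S s`, the least `m ≥ 1` with `s + m ∈ S`. -/
noncomputable def cycGap (d : ℕ) (S : Finset (ZMod d)) (s : ZMod d) : ℕ :=
  sInf {m : ℕ | 0 < m ∧ s + (m : ZMod d) ∈ S}

/-- `γ_{d,k} = Σ_𝒫 α_{a_1} ⋯ α_{a_k}`, summed over all cyclic compositions `𝒫` of `d`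
into `k` parts (encoded as `k`-element sets of deleted edges), where `a_1, …, a_k` are
the part sizes.  (For `d = 0` there is no cycle and the sum is empty.) -/
noncomputable def cycCompSum {R : Type*} [CommRing R] (α : ℕ → R) (d k : ℕ) : R :=
  if h : d = 0 then 0 else
    haveI : NeZero d := ⟨h⟩
    ∑ S ∈ (Finset.univ : Finset (ZMod d)).powersetCard k, ∏ s ∈ S, α (cycGap d S s)

/-
List a `k`-set `S` of deleted edges of `ℤ/d` in increasing order, `s₀ < ⋯ < s_{k-1} < d`,
and put `s_k = s₀ + d`; the part sizes are the differences `a_i = s_{i+1} - s_i`. Conversely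
a composition `(a₀, …, a_{k-1})` of `d` and a start `s₀` give back
`S = {s₀ + a₀ + ⋯ + a_{i-1}}`, and the normalisation `s_{k-1} < d` allows exactly the
`a_{k-1}` starts `s₀ < a_{k-1}`. Hence `γ_{d,k} = Σ a_{k-1} α_{a₀} ⋯ α_{a_{k-1}}` over the
compositions of `d` into `k` parts, which is the coefficient of `t^d` in `f(t)^{k-1} · t f′(t)`
because `t f′(t) = Σ i α_i t^i`.
-/

open Finset

theorem ZMod.natCast_injOn_Ico (w d : ℕ) :
    Set.InjOn (Nat.cast : ℕ → ZMod d) (Set.Ico w (w + d)) := by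
  intro a ha b hb hab
  rw [Set.mem_Ico] at ha hb
  rw [ZMod.natCast_eq_natCast_iff] at hab
  have hsub : w + (a - w) ≡ w + (b - w) [MOD d] := by
    rwa [Nat.add_sub_cancel' ha.1, Nat.add_sub_cancel' hb.1]
  have := (Nat.ModEq.add_left_cancel' w hsub).eq_of_lt_of_lt (by omega) (by omega)
  omega

theorem StrictMono.apply_castSucc_mem_Ico {α : Type*} [Preorder α] {n : ℕ}
    {f : Fin (n + 1) → α} (hf : StrictMono f) (i : Fin n) :
    f i.castSucc ∈ Set.Ico (f 0) (f (Fin.last n)) :=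
  ⟨hf.monotone (Fin.zero_le _), hf (Fin.castSucc_lt_last i)⟩

theorem Fin.strictMono_snoc {α : Type*} [Preorder α] {n : ℕ} {f : Fin n → α}
    (hf : StrictMono f) {x : α} (hx : ∀ i, f i < x) :
    StrictMono (Fin.snoc (α := fun _ => α) f x) := by
  intro a b hab
  obtain ⟨a, rfl⟩ | rfl := a.eq_castSucc_or_eq_last
  · obtain ⟨b, rfl⟩ | rfl := b.eq_castSucc_or_eq_last
    · simpa using hf (Fin.castSucc_lt_castSucc_iff.1 hab)
    · simpa using hx a
  · exact absurd hab (not_lt.2 (Fin.le_last b))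

theorem Fin.partialSum_last {M : Type*} [AddCommMonoid M] {n : ℕ} (f : Fin n → M) :
    Fin.partialSum f (Fin.last n) = ∑ i, f i := by
  rw [Fin.partialSum, Fin.val_last, List.take_of_length_le (by simp), List.sum_ofFn]

def compositionTuples (k d : ℕ) : Finset (Fin k → ℕ) :=
  (finAntidiagonal k d).filter fun c => ∀ i, 0 < c i

theorem mem_compositionTuples {k d : ℕ} {c : Fin k → ℕ} :
    c ∈ compositionTuples k d ↔ ∑ i, c i = d ∧ ∀ i, 0 < c i := by
  simp [compositionTuples]

namespace PowerSeries

variable {R : Type*} [CommSemiring R]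

theorem coeff_prod_fin {k : ℕ} (F : Fin k → R⟦X⟧) (n : ℕ) :
    coeff n (∏ i, F i) = ∑ c ∈ finAntidiagonal k n, ∏ i, coeff (c i) (F i) := by
  rw [coeff_prod]
  refine sum_nbij' (⇑) Finsupp.equivFunOnFinite.symm ?_ ?_ ?_ ?_ ?_ <;> simp

theorem coeff_X_mul_derivative (f : R⟦X⟧) (n : ℕ) :
    coeff n (X * derivative R f) = n * coeff n f := by
  cases n with
  | zero => simp
  | succ n => rw [coeff_succ_X_mul, coeff_derivative, mul_comm, Nat.cast_succ]

theorem coeff_pow_mul_X_mul_derivative {f : R⟦X⟧} (hf : coeff 0 f = 0) (k d : ℕ) :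
    coeff d (f ^ k * (X * derivative R f)) =
      ∑ c ∈ compositionTuples (k + 1) d, (c (Fin.last k) : R) * ∏ i, coeff (c i) f := by
  have hprod : f ^ k * (X * derivative R f) =
      ∏ i : Fin (k + 1), Fin.snoc (α := fun _ => R⟦X⟧) (fun _ => f) (X * derivative R f) i := by
    simp [Fin.prod_univ_castSucc]
  have hterm (c : Fin (k + 1) → ℕ) :
      ∏ i, coeff (c i) (Fin.snoc (α := fun _ => R⟦X⟧) (fun _ => f) (X * derivative R f) i) =
        (c (Fin.last k) : R) * ∏ i, coeff (c i) f := by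
    simp only [Fin.prod_univ_castSucc (n := k), Fin.snoc_castSucc, Fin.snoc_last,
      coeff_X_mul_derivative]
    ring
  rw [hprod, coeff_prod_fin, compositionTuples, sum_filter_of_ne]
  · exact sum_congr rfl fun c _ => hterm c
  · intro c _ hne i
    by_contra hci
    have hzero : coeff (c i) f = 0 := by rw [Nat.eq_zero_of_not_pos hci, hf]
    exact hne (by rw [prod_eq_zero (mem_univ i) hzero, mul_zero])

end PowerSeries

section CutSet

variable {d k : ℕ} {Q : Fin (k + 1) → ℕ}

def cutSet (d : ℕ) (Q : Fin (k + 1) → ℕ) : Finset (ZMod d) :=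
  univ.image fun i : Fin k => (Q i.castSucc : ZMod d)

theorem injective_natCast_castSucc (hQ : StrictMono Q) (hper : Q (Fin.last k) = Q 0 + d) :
    Function.Injective fun i : Fin k => (Q i.castSucc : ZMod d) := fun i i' h =>
  Fin.castSucc_injective _ <| hQ.injective <|
    ZMod.natCast_injOn_Ico _ _ (hper ▸ hQ.apply_castSucc_mem_Ico i)
      (hper ▸ hQ.apply_castSucc_mem_Ico i') h

theorem card_cutSet (hQ : StrictMono Q) (hper : Q (Fin.last k) = Q 0 + d) :
    (cutSet d Q).card = k := by
  rw [cutSet, card_image_of_injective _ (injective_natCast_castSucc hQ hper), card_univ,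
    Fintype.card_fin]

theorem cycGap_cutSet (hQ : StrictMono Q) (hper : Q (Fin.last k) = Q 0 + d) (i : Fin k) :
    cycGap d (cutSet d Q) (Q i.castSucc) = Q i.succ - Q i.castSucc := by
  have hlt : Q i.castSucc < Q i.succ := hQ i.castSucc_lt_succ
  refine IsLeast.csInf_eq ⟨⟨by omega, ?_⟩, fun m ⟨hm0, hm⟩ => ?_⟩
  · rw [← Nat.cast_add, Nat.add_sub_cancel' hlt.le]
    obtain ⟨i', hi'⟩ | hi := i.succ.eq_castSucc_or_eq_last
    · exact hi' ▸ mem_image_of_mem _ (mem_univ i')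
    · rw [hi, hper, Nat.cast_add, ZMod.natCast_self, add_zero]
      exact mem_image.2 ⟨⟨0, i.pos⟩, mem_univ _, rfl⟩
  · by_contra! hm'
    obtain ⟨i', -, hi'⟩ := mem_image.1 hm
    rw [← Nat.cast_add] at hi'
    have hsucc : Q i.succ ≤ Q 0 + d := hper ▸ hQ.monotone (Fin.le_last _)
    have h0 : Q 0 ≤ Q i.castSucc := hQ.monotone (Fin.zero_le _)
    have heq := ZMod.natCast_injOn_Ico _ _ (hper ▸ hQ.apply_castSucc_mem_Ico i')
      (Set.mem_Ico.2 ⟨by omega, by omega⟩) hi'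
    have h1 := hQ.lt_iff_lt.1 (show Q i.castSucc < Q i'.castSucc by omega)
    have h2 := hQ.lt_iff_lt.1 (show Q i'.castSucc < Q i.succ by omega)
    rw [Fin.castSucc_lt_castSucc_iff] at h1
    exact (Fin.castSucc_lt_succ_iff.1 h2).not_gt h1

theorem prod_cutSet_cycGap {M : Type*} [CommMonoid M] (g : ℕ → M) (hQ : StrictMono Q)
    (hper : Q (Fin.last k) = Q 0 + d) :
    ∏ s ∈ cutSet d Q, g (cycGap d (cutSet d Q) s) =
      ∏ i : Fin k, g (Q i.succ - Q i.castSucc) :=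
  (prod_image fun i _ i' _ h => injective_natCast_castSucc hQ hper h).trans <|
    prod_congr rfl fun i _ => by rw [cycGap_cutSet hQ hper]

theorem le_of_natCast_mem_cutSet (hQ : Monotone Q) (hlt : ∀ i : Fin k, Q i.castSucc < d)
    {n : ℕ} (hn : n < d) (h : (n : ZMod d) ∈ cutSet d Q) : Q 0 ≤ n := by
  obtain ⟨i, -, hi⟩ := mem_image.1 h
  have := ZMod.natCast_injOn_Ico 0 d (by simpa using hlt i) (by simpa using hn) hi
  exact this ▸ hQ (Fin.zero_le _)

theorem eq_of_cutSet_eq [NeZero k] {Q' : Fin (k + 1) → ℕ}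
    (hQ : StrictMono Q) (hper : Q (Fin.last k) = Q 0 + d) (hlt : ∀ i : Fin k, Q i.castSucc < d)
    (hQ' : StrictMono Q') (hper' : Q' (Fin.last k) = Q' 0 + d)
    (hlt' : ∀ i : Fin k, Q' i.castSucc < d) (h : cutSet d Q = cutSet d Q') : Q = Q' := by
  -- `Q 0` is the least residue in the set, and each further entry adds the gap found there.
  have hmem {Q : Fin (k + 1) → ℕ} : (Q 0 : ZMod d) ∈ cutSet d Q :=
    mem_image.2 ⟨0, mem_univ _, by rw [Fin.castSucc_zero]⟩
  have hlt0 := Fin.castSucc_zero (n := k) ▸ hlt 0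
  have hlt0' := Fin.castSucc_zero (n := k) ▸ hlt' 0
  have h0 : Q 0 = Q' 0 := le_antisymm
    (le_of_natCast_mem_cutSet hQ.monotone hlt hlt0' (h ▸ hmem))
    (le_of_natCast_mem_cutSet hQ'.monotone hlt' hlt0 (h ▸ hmem))
  funext i
  induction i using Fin.induction with
  | zero => exact h0
  | succ i ih =>
    have e := cycGap_cutSet hQ hper i
    have e' := cycGap_cutSet hQ' hper' i
    rw [h, ih] at e
    have := hQ i.castSucc_lt_succ
    have := hQ' i.castSucc_lt_succ
    omega

theorem exists_cutSet_eq [NeZero d] [NeZero k] {S : Finset (ZMod d)} (hS : S.card = k) :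
    ∃ Q : Fin (k + 1) → ℕ, StrictMono Q ∧ Q (Fin.last k) = Q 0 + d ∧
      (∀ i : Fin k, Q i.castSucc < d) ∧ cutSet d Q = S := by
  have hcard : (S.image ZMod.val).card = k := by
    rwa [card_image_of_injective _ (ZMod.val_injective d)]
  set σ := (S.image ZMod.val).orderEmbOfFin hcard
  have hσ : ∀ i, σ i < d := fun i => by
    obtain ⟨s, -, hs⟩ := mem_image.1 (orderEmbOfFin_mem _ hcard i)
    exact hs ▸ ZMod.val_lt s
  refine ⟨Fin.snoc (α := fun _ => ℕ) σ (σ 0 + d),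
    Fin.strictMono_snoc σ.strictMono fun i => (hσ i).trans_le (Nat.le_add_left d _),
    by simp, by simpa using hσ, ?_⟩
  simp only [cutSet, Fin.snoc_castSucc]
  rw [← Function.comp_def, ← image_image, image_orderEmbOfFin_univ, image_image]
  simp [Function.comp_def]

end CutSet

section CutPositions

variable {k : ℕ}

def cutPositions (c : Fin k → ℕ) (j : ℕ) (i : Fin (k + 1)) : ℕ :=
  j + Fin.partialSum c i

@[simp] theorem cutPositions_zero (c : Fin k → ℕ) (j : ℕ) : cutPositions c j 0 = j := by
  simp [cutPositions]

theorem cutPositions_succ (c : Fin k → ℕ) (j : ℕ) (i : Fin k) :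
    cutPositions c j i.succ = cutPositions c j i.castSucc + c i := by
  rw [cutPositions, cutPositions, Fin.partialSum_succ, add_assoc]

theorem cutPositions_last (c : Fin k → ℕ) (j : ℕ) :
    cutPositions c j (Fin.last k) = j + ∑ i, c i := by
  rw [cutPositions, Fin.partialSum_last]

theorem strictMono_cutPositions {c : Fin k → ℕ} (hc : ∀ i, 0 < c i) (j : ℕ) :
    StrictMono (cutPositions c j) :=
  Fin.strictMono_iff_lt_succ.2 fun i => by
    rw [cutPositions_succ]
    exact Nat.lt_add_of_pos_right (hc i)

theorem cutPositions_sub_castSucc {Q : Fin (k + 1) → ℕ} (hQ : Monotone Q) :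
    cutPositions (fun i => Q i.succ - Q i.castSucc) (Q 0) = Q := by
  funext i
  induction i using Fin.induction with
  | zero => exact cutPositions_zero _ _
  | succ i ih =>
    rw [cutPositions_succ, ih]
    have := hQ i.castSucc_le_succ
    omega

theorem cutPositions_inj {c c' : Fin k → ℕ} {j j' : ℕ} :
    cutPositions c j = cutPositions c' j' ↔ c = c' ∧ j = j' := by
  refine ⟨fun h => ⟨funext fun i => ?_, by simpa using congrFun h 0⟩,
    fun h => h.1 ▸ h.2 ▸ rfl⟩
  have := cutPositions_succ c j i
  rw [h, cutPositions_succ] at this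
  omega

end CutPositions

section CycCompSum

variable {d k : ℕ}

theorem cutPositions_castSucc_lt {c : Fin (k + 1) → ℕ} (hc : c ∈ compositionTuples (k + 1) d)
    {j : ℕ} (hj : j < c (Fin.last k)) (i : Fin (k + 1)) : cutPositions c j i.castSucc < d := by
  have hmono := (strictMono_cutPositions (mem_compositionTuples.1 hc).2 j).monotone
  have hle := hmono (Fin.castSucc_le_castSucc_iff.2 (Fin.le_last i))
  have hlast := cutPositions_succ c j (Fin.last k)
  rw [Fin.succ_last, cutPositions_last, (mem_compositionTuples.1 hc).1] at hlast
  omega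

theorem sum_powersetCard_prod_cycGap {R : Type*} [CommSemiring R] [NeZero d] (g : ℕ → R) :
    ∑ S ∈ (univ : Finset (ZMod d)).powersetCard (k + 1), ∏ s ∈ S, g (cycGap d S s) =
      ∑ p ∈ (compositionTuples (k + 1) d).sigma (fun c => range (c (Fin.last k))),
        ∏ i, g (p.1 i) := by
  have hQ {c : Fin (k + 1) → ℕ} (hc : c ∈ compositionTuples (k + 1) d) (j : ℕ) :=
    strictMono_cutPositions (mem_compositionTuples.1 hc).2 j
  have hper {c : Fin (k + 1) → ℕ} (hc : c ∈ compositionTuples (k + 1) d) (j : ℕ) :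
      cutPositions c j (Fin.last (k + 1)) = cutPositions c j 0 + d := by
    rw [cutPositions_last, cutPositions_zero, (mem_compositionTuples.1 hc).1]
  symm
  refine sum_bij (fun p _ => cutSet d (cutPositions p.1 p.2)) ?_ ?_ ?_ ?_
  · rintro ⟨c, j⟩ hp
    rw [mem_sigma] at hp
    exact mem_powersetCard.2 ⟨subset_univ _, card_cutSet (hQ hp.1 j) (hper hp.1 j)⟩
  · rintro ⟨c, j⟩ hp ⟨c', j'⟩ hp' h
    rw [mem_sigma, mem_range] at hp hp'
    obtain ⟨rfl, rfl⟩ := cutPositions_inj.1 <| eq_of_cutSet_eq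
      (hQ hp.1 j) (hper hp.1 j) (cutPositions_castSucc_lt hp.1 hp.2)
      (hQ hp'.1 j') (hper hp'.1 j') (cutPositions_castSucc_lt hp'.1 hp'.2) h
    rfl
  · intro S hS
    obtain ⟨Q, hQ, hper, hlt, rfl⟩ := exists_cutSet_eq (mem_powersetCard.1 hS).2
    have hQc := cutPositions_sub_castSucc hQ.monotone
    refine ⟨⟨fun i => Q i.succ - Q i.castSucc, Q 0⟩, ?_, by rw [hQc]⟩
    have hsum := cutPositions_last (fun i => Q i.succ - Q i.castSucc) (Q 0)
    rw [hQc, hper] at hsum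
    have hlast : Q 0 < Q (Fin.last k).succ - Q (Fin.last k).castSucc := by
      have := hlt (Fin.last k)
      rw [Fin.succ_last, hper]
      omega
    exact mem_sigma.2 ⟨mem_compositionTuples.2 ⟨by dsimp only; omega,
      fun i => Nat.sub_pos_of_lt (hQ i.castSucc_lt_succ)⟩, mem_range.2 hlast⟩
  · rintro ⟨c, j⟩ hp
    rw [mem_sigma] at hp
    rw [prod_cutSet_cycGap g (hQ hp.1 j) (hper hp.1 j)]
    simp only [cutPositions_succ, Nat.add_sub_cancel_left]

theorem cycCompSum_eq_sum_compositionTuples {R : Type*} [CommRing R] (α : ℕ → R) (d k : ℕ) :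
    cycCompSum α d (k + 1) =
      ∑ c ∈ compositionTuples (k + 1) d, (c (Fin.last k) : R) * ∏ i, α (c i) := by
  rcases eq_or_ne d 0 with rfl | hd
  · refine (dif_pos rfl).trans (sum_eq_zero fun c hc => ?_).symm
    obtain ⟨hsum, hpos⟩ := mem_compositionTuples.1 hc
    exact absurd ((sum_eq_zero_iff.1 hsum) 0 (mem_univ _)) (hpos 0).ne'
  · have : NeZero d := ⟨hd⟩
    rw [cycCompSum, dif_neg hd, sum_powersetCard_prod_cycGap, sum_sigma]
    simp only [sum_const, card_range, nsmul_eq_mul]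

end CycCompSum

open PowerSeries in
/-- With `f(t) = Σ_{i ≥ 1} α_i t^i`, we have
`Σ_{d ≥ k} γ_{d,k} t^d = t · f′(t) · f(t)^{k-1}` as formal power series.
(Note `γ_{d,k} = 0` for `0 < d < k`, so summing over all `d` is the same.) -/
theorem cyclic_composition_genfun {R : Type*} [CommRing R] (α : ℕ → R) (k : ℕ) (hk : 1 ≤ k)
    (f : R⟦X⟧) (hf : f = mk fun i => if i = 0 then 0 else α i) :
    mk (fun d => cycCompSum α d k) = X * (derivative R f) * f ^ (k - 1) := by
  obtain ⟨k, rfl⟩ := Nat.exists_eq_add_of_le' hk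
  have hcoeff {i : ℕ} (hi : 0 < i) : coeff i f = α i := by simp [hf, hi.ne']
  ext d
  rw [coeff_mk, cycCompSum_eq_sum_compositionTuples, Nat.add_sub_cancel, mul_comm,
    coeff_pow_mul_X_mul_derivative (by simp [hf])]
  refine sum_congr rfl fun c hc => ?_
  simp only [hcoeff ((mem_compositionTuples.1 hc).2 _)]
end

section
/- Let (α_i)_{i≥1} be a sequence in a commutative ring, let f(t) = Σ_{i≥1} α_i t^i as a formal power series, and for d ≥ 1 let γ_d = Σ_{k≥1} Σ_{𝒫} α_{a_1}·α_{a_2}⋯α_{a_k}, where the inner sum is over all cyclic compositions 𝒫 of d into k parts with part sizes a_1,…,a_k. Then Σ_{d≥1} γ_d t^d = t·f′(t)/(1 − f(t)) as formal power series (the inverse exists since f has zero constant term). -/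
/-!
Read a cyclic composition of `d` as the set `A ⊆ {0, …, d - 1}` of its deleted edges. The part
after `a ∈ A` runs up to the next element of `A`, except the part after the last element, which
wraps around the cycle. Contracting the part of size `i` that starts right after the first element
of `A` turns the sets with at least two elements bijectively into the nonempty sets for `d - i`,
leaving the wrap-around part alone, while the `d` singletons each contribute `α_d`. Hence
`γ_d = d α_d + Σ_{i ≥ 1} α_i γ_{d-i}`, that is `G = t f' + f G`.
-/

theorem Finset.sum_powerset_erase_empty {α M : Type*} [DecidableEq α] [AddCancelCommMonoid M]
    (s : Finset α) (f : Finset α → M) :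
    ∑ t ∈ s.powerset.erase ∅, f t =
      ∑ k ∈ Finset.Icc 1 s.card, ∑ t ∈ s.powersetCard k, f t := by
  have h := Finset.add_sum_erase _ f (Finset.empty_mem_powerset s)
  rw [Finset.sum_powerset, Finset.range_eq_Ico, Finset.sum_eq_sum_Ico_succ_bot (Nat.succ_pos _),
    Finset.powersetCard_zero, Finset.sum_singleton, zero_add, Nat.succ_eq_add_one,
    Finset.Ico_add_one_right_eq_Icc] at h
  exact add_left_cancel h

open PowerSeries in
theorem PowerSeries.coeff_X_mul_derivative_s3 {R : Type*} [CommRing R] (f : R⟦X⟧) (n : ℕ) :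
    coeff n (X * d⁄dX R f) = n * coeff n f := by
  rcases n with _ | n
  · simp
  · rw [coeff_succ_X_mul, coeff_derivative, mul_comm, Nat.cast_succ]

namespace CyclicComposition

open Finset PowerSeries

-- Total versions of `min'` and `max'`, with junk value `0` at `∅`.
noncomputable def first (A : Finset ℕ) : ℕ := sInf (A : Set ℕ)

noncomputable def last (A : Finset ℕ) : ℕ := sSup (A : Set ℕ)

noncomputable def gap (A : Finset ℕ) (a : ℕ) : ℕ := sInf {m | 0 < m ∧ a + m ∈ A}

variable {A : Finset ℕ} {a b i m x d : ℕ}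

theorem first_mem (h : A.Nonempty) : first A ∈ A := Nat.sInf_mem (coe_nonempty.mpr h)

theorem first_le (ha : a ∈ A) : first A ≤ a := Nat.sInf_le ha

theorem last_mem (h : A.Nonempty) : last A ∈ A := Nat.sSup_mem (coe_nonempty.mpr h) A.bddAbove

theorem le_last (ha : a ∈ A) : a ≤ last A := le_csSup A.bddAbove ha

theorem first_singleton : first {a} = a := by simp [first]

theorem last_singleton : last {a} = a := by simp [last]

theorem gap_le (hm : 0 < m) (h : a + m ∈ A) : gap A a ≤ m := Nat.sInf_le ⟨hm, h⟩

theorem gap_pos_and_mem (h : ∃ b ∈ A, a < b) : 0 < gap A a ∧ a + gap A a ∈ A := by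
  obtain ⟨b, hb, hab⟩ := h
  exact Nat.sInf_mem (s := {m | 0 < m ∧ a + m ∈ A})
    ⟨b - a, Nat.sub_pos_of_lt hab, by rwa [Nat.add_sub_cancel' hab.le]⟩

variable {R : Type*} [CommRing R]

-- The part after `last A` wraps around the cycle `ℤ/d` and has size `d - last A + first A`.
noncomputable def weight (α : ℕ → R) (d : ℕ) (A : Finset ℕ) : R :=
  α (d - last A + first A) * ∏ a ∈ A.erase (last A), α (gap A a)

noncomputable def weightSum (α : ℕ → R) (d : ℕ) : R :=
  ∑ A ∈ (range d).powerset.erase ∅, weight α d A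

-- `expand i` inserts a part of size `i` right after `first A`; `contract` removes that part.
noncomputable def expand (i : ℕ) (A : Finset ℕ) : Finset ℕ :=
  insert (first A) (A.image (· + i))

noncomputable def contract (A : Finset ℕ) : Finset ℕ :=
  (A.erase (first A)).image (· - gap A (first A))

theorem add_mem_expand (ha : a ∈ A) : a + i ∈ expand i A :=
  mem_insert_of_mem (mem_image_of_mem _ ha)

theorem first_notMem_image_add {B : Finset ℕ} (hB : B ⊆ A) (hi : 0 < i) :
    first A ∉ B.image (· + i) := by
  simp only [mem_image, not_exists, not_and]
  intro b hb
  have := first_le (hB hb)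
  omega

theorem card_expand (hi : 0 < i) : (expand i A).card = A.card + 1 := by
  rw [expand, card_insert_of_notMem (first_notMem_image_add subset_rfl hi),
    card_image_of_injective _ (add_left_injective i)]

theorem expand_subset_range (hA : A ⊆ range (d - i)) (h : A.Nonempty) :
    expand i A ⊆ range d := by
  intro x hx
  rw [mem_range]
  rcases mem_insert.mp hx with rfl | hx
  · have := mem_range.mp (hA (first_mem h))
    omega
  · obtain ⟨a, ha, rfl⟩ := mem_image.mp hx
    have := mem_range.mp (hA ha)
    omega

theorem first_expand : first (expand i A) = first A := by
  refine IsLeast.csInf_eq ⟨mem_insert_self _ _, ?_⟩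
  simp only [expand, coe_insert, coe_image]
  rintro _ (rfl | ⟨a, ha, rfl⟩)
  · rfl
  · exact (first_le ha).trans (Nat.le_add_right a i)

theorem last_expand (h : A.Nonempty) : last (expand i A) = last A + i := by
  refine IsGreatest.csSup_eq ⟨add_mem_expand (last_mem h), ?_⟩
  simp only [expand, coe_insert, coe_image]
  rintro _ (rfl | ⟨a, ha, rfl⟩)
  · exact (le_last (first_mem h)).trans (Nat.le_add_right _ i)
  · exact Nat.add_le_add_right (le_last ha) i

theorem gap_expand_first (h : A.Nonempty) (hi : 0 < i) : gap (expand i A) (first A) = i := by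
  refine IsLeast.csInf_eq ⟨⟨hi, add_mem_expand (first_mem h)⟩, ?_⟩
  rintro m ⟨hm, hmem⟩
  rcases mem_insert.mp hmem with h' | h'
  · omega
  · obtain ⟨a, ha, heq⟩ := mem_image.mp h'
    have := first_le ha
    omega

theorem gap_expand_add (ha : a ∈ A) (hi : 0 < i) : gap (expand i A) (a + i) = gap A a := by
  have hfirst := first_le ha
  refine congrArg sInf (Set.ext fun m => and_congr_right fun hm => ?_)
  simp only [expand, mem_insert, mem_image]
  constructor
  · rintro (h | ⟨b, hb, hbm⟩)
    · omega
    · rwa [show a + m = b by omega]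
  · exact fun h => Or.inr ⟨a + m, h, by omega⟩

theorem weight_expand (α : ℕ → R) (h : A.Nonempty) (hi : 0 < i) :
    weight α d (expand i A) = α i * weight α (d - i) A := by
  have hfl := le_last (first_mem h)
  have herase : (expand i A).erase (last A + i) =
      insert (first A) ((A.erase (last A)).image (· + i)) := by
    rw [expand, erase_insert_of_ne (by omega), image_erase (add_left_injective i)]
  rw [weight, weight, last_expand h, first_expand, herase,
    prod_insert (first_notMem_image_add (erase_subset _ _) hi), gap_expand_first h hi,
    prod_image fun x _ y _ hxy => add_right_cancel hxy,
    prod_congr rfl fun a ha => by rw [gap_expand_add (mem_of_mem_erase ha) hi],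
    show d - (last A + i) + first A = d - i - last A + first A by omega]
  ring

theorem contract_expand (h : A.Nonempty) (hi : 0 < i) : contract (expand i A) = A := by
  rw [contract, first_expand, gap_expand_first h hi, expand,
    erase_insert (first_notMem_image_add subset_rfl hi), image_image]
  simp [Function.comp_def]

theorem gap_first_pos_and_mem (h : 1 < A.card) :
    0 < gap A (first A) ∧ first A + gap A (first A) ∈ A := by
  obtain ⟨b, hb, hne⟩ := exists_mem_ne h (first A)
  exact gap_pos_and_mem ⟨b, hb, lt_of_le_of_ne (first_le hb) hne.symm⟩

theorem first_add_gap_first_le (hb : b ∈ A.erase (first A)) :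
    first A + gap A (first A) ≤ b := by
  have hlt := lt_of_le_of_ne (first_le (mem_of_mem_erase hb)) (ne_of_mem_erase hb).symm
  have := gap_le (A := A) (Nat.sub_pos_of_lt hlt)
    (by rw [Nat.add_sub_cancel' hlt.le]; exact mem_of_mem_erase hb)
  omega

theorem first_mem_contract (h : 1 < A.card) : first A ∈ contract A := by
  obtain ⟨hg, hmem⟩ := gap_first_pos_and_mem h
  exact mem_image.mpr ⟨_, mem_erase.mpr ⟨by omega, hmem⟩, Nat.add_sub_cancel _ _⟩

theorem first_contract (h : 1 < A.card) : first (contract A) = first A := by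
  refine IsLeast.csInf_eq ⟨first_mem_contract h, fun x hx => ?_⟩
  obtain ⟨b, hb, rfl⟩ := mem_image.mp hx
  have := first_add_gap_first_le hb
  omega

theorem expand_contract (h : 1 < A.card) : expand (gap A (first A)) (contract A) = A := by
  have himage : (contract A).image (· + gap A (first A)) = A.erase (first A) := by
    rw [contract, image_image]
    refine (image_congr fun b hb => ?_).trans image_id
    have := first_add_gap_first_le hb
    simp only [Function.comp_apply, id_eq]
    omega
  rw [expand, himage, first_contract h, insert_erase (first_mem (card_pos.mp (by omega)))]

theorem add_gap_first_lt_of_mem_contract (hA : A ⊆ range d) (h : 1 < A.card)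
    (hx : x ∈ contract A) : x + gap A (first A) < d := by
  have := add_mem_expand (i := gap A (first A)) hx
  rw [expand_contract h] at this
  exact mem_range.mp (hA this)

theorem weight_singleton (α : ℕ → R) (h : a < d) : weight α d {a} = α d := by
  rw [weight, last_singleton, first_singleton, erase_singleton, prod_empty, mul_one,
    Nat.sub_add_cancel h.le]

theorem sum_weight_powersetCard_one (α : ℕ → R) :
    ∑ A ∈ (range d).powersetCard 1, weight α d A = d • α d := by
  rw [powersetCard_one, sum_map]
  exact (sum_congr rfl fun a ha => weight_singleton α (mem_range.mp ha)).trans (by simp)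

theorem sum_weight_filter_one_lt_card (α : ℕ → R) :
    ∑ A ∈ (range d).powerset with 1 < A.card, weight α d A =
      ∑ i ∈ Icc 1 d, α i * weightSum α (d - i) := by
  simp_rw [weightSum, mul_sum]
  rw [sum_sigma']
  refine sum_nbij' (fun A => ⟨gap A (first A), contract A⟩) (fun p => expand p.1 p.2)
    ?_ ?_ (fun A hA => expand_contract (mem_filter.mp hA).2) ?_ ?_
  · intro A hA
    obtain ⟨hsub, hcard⟩ := mem_filter.mp hA
    have hsub := mem_powerset.mp hsub
    have := add_gap_first_lt_of_mem_contract hsub hcard (first_mem_contract hcard)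
    simp only [mem_sigma, mem_Icc, mem_erase, mem_powerset]
    refine ⟨⟨(gap_first_pos_and_mem hcard).1, by omega⟩,
      ne_empty_of_mem (first_mem_contract hcard), fun y hy => mem_range.mpr ?_⟩
    have := add_gap_first_lt_of_mem_contract hsub hcard hy
    omega
  · rintro ⟨i, A⟩ hp
    simp only [mem_sigma, mem_Icc, mem_erase, mem_powerset] at hp
    obtain ⟨⟨hi, -⟩, hne, hsub⟩ := hp
    have hA := nonempty_iff_ne_empty.mpr hne
    refine mem_filter.mpr ⟨mem_powerset.mpr (expand_subset_range hsub hA), ?_⟩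
    rw [card_expand hi]
    exact Nat.lt_add_of_pos_left hA.card_pos
  · rintro ⟨i, A⟩ hp
    simp only [mem_sigma, mem_Icc, mem_erase, mem_powerset] at hp
    have hA := nonempty_iff_ne_empty.mpr hp.2.1
    simp only [first_expand, gap_expand_first hA hp.1.1, contract_expand hA hp.1.1]
  · intro A hA
    have hcard := (mem_filter.mp hA).2
    conv_lhs => rw [← expand_contract hcard]
    exact weight_expand α ⟨_, first_mem_contract hcard⟩ (gap_first_pos_and_mem hcard).1

theorem weightSum_eq_nsmul_add_sum (α : ℕ → R) (d : ℕ) :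
    weightSum α d = d • α d + ∑ i ∈ Icc 1 d, α i * weightSum α (d - i) := by
  classical
  rw [← sum_weight_powersetCard_one, ← sum_weight_filter_one_lt_card, weightSum,
    ← sum_filter_add_sum_filter_not _ fun A => A.card = 1]
  congr 1 <;> refine sum_congr (ext fun A => ?_) fun _ _ => rfl <;>
    simp only [mem_filter, mem_erase, mem_powerset, mem_powersetCard] <;>
    grind [card_eq_zero]

theorem isLeast_gap_mod (hA : A ⊆ range d) (ha : a ∈ A) (hlt : a < last A) :
    IsLeast {m | 0 < m ∧ (a + m) % d ∈ A} (gap A a) := by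
  obtain ⟨hg, hmem⟩ := gap_pos_and_mem ⟨last A, last_mem ⟨a, ha⟩, hlt⟩
  have hd := mem_range.mp (hA hmem)
  refine ⟨⟨hg, by rwa [Nat.mod_eq_of_lt hd]⟩, fun m ⟨hm, hmem'⟩ => ?_⟩
  by_contra! hmg
  rw [Nat.mod_eq_of_lt (by omega)] at hmem'
  exact absurd (gap_le hm hmem') (by omega)

theorem isLeast_last_add_mod (hA : A ⊆ range d) (h : A.Nonempty) :
    IsLeast {m | 0 < m ∧ (last A + m) % d ∈ A} (d - last A + first A) := by
  have hlast := mem_range.mp (hA (last_mem h))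
  have hfirst := mem_range.mp (hA (first_mem h))
  refine ⟨⟨by omega, ?_⟩, fun m ⟨hm, hmem⟩ => ?_⟩
  · rw [show last A + (d - last A + first A) = first A + d by omega, Nat.add_mod_right,
      Nat.mod_eq_of_lt hfirst]
    exact first_mem h
  · rcases lt_or_ge (last A + m) d with hlt | hge
    · rw [Nat.mod_eq_of_lt hlt] at hmem
      have := le_last hmem
      omega
    · have := first_le hmem
      have := (Nat.mod_eq_sub_mod hge).trans_le (Nat.mod_le _ d)
      omega

theorem prod_gap_mod_eq_weight (α : ℕ → R) (hA : A ⊆ range d) (h : A.Nonempty) :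
    ∏ a ∈ A, α (sInf {m | 0 < m ∧ (a + m) % d ∈ A}) = weight α d A := by
  rw [← mul_prod_erase _ _ (last_mem h), (isLeast_last_add_mod hA h).csInf_eq, weight]
  refine congrArg _ (prod_congr rfl fun a ha => ?_)
  rw [(isLeast_gap_mod hA (mem_of_mem_erase ha)
    (lt_of_le_of_ne (le_last (mem_of_mem_erase ha)) (ne_of_mem_erase ha))).csInf_eq]

def valEmbedding (d : ℕ) [NeZero d] : ZMod d ↪ ℕ := ⟨ZMod.val, ZMod.val_injective d⟩

theorem map_valEmbedding_univ [NeZero d] :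
    (univ : Finset (ZMod d)).map (valEmbedding d) = range d := by
  ext n
  simp only [mem_map, mem_univ, true_and, mem_range]
  exact ⟨fun ⟨s, hs⟩ => hs ▸ ZMod.val_lt s, fun h => ⟨n, ZMod.val_cast_of_lt h⟩⟩

theorem natCast_mem_iff_mod_mem_map [NeZero d] {S : Finset (ZMod d)} :
    (m : ZMod d) ∈ S ↔ m % d ∈ S.map (valEmbedding d) := by
  rw [mem_map, ← ZMod.val_natCast]
  exact ⟨fun h => ⟨_, h, rfl⟩, fun ⟨s, hs, hval⟩ => ZMod.val_injective d hval ▸ hs⟩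

theorem prod_cycGap [NeZero d] (α : ℕ → R) {S : Finset (ZMod d)} (hS : S.Nonempty) :
    ∏ s ∈ S, α (cycGap d S s) = weight α d (S.map (valEmbedding d)) := by
  rw [← prod_gap_mod_eq_weight α _ hS.map]
  · rw [prod_map]
    refine prod_congr rfl fun s _ => congrArg α (congrArg sInf (Set.ext fun m => ?_))
    refine and_congr_right fun _ => ?_
    rw [← natCast_mem_iff_mod_mem_map, Nat.cast_add]
    change _ ↔ (s.val : ZMod d) + m ∈ S
    rw [ZMod.natCast_zmod_val]
  · rw [← map_valEmbedding_univ]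
    exact map_subset_map.mpr (subset_univ S)

theorem cycCompSum_eq_sum_weight (α : ℕ → R) (d : ℕ) {k : ℕ} (hk : 1 ≤ k) :
    cycCompSum α d k = ∑ A ∈ (range d).powersetCard k, weight α d A := by
  rcases eq_or_ne d 0 with rfl | hd
  · rw [cycCompSum, dif_pos rfl, range_zero, powersetCard_eq_empty.mpr (by rwa [card_empty]),
      sum_empty]
  have : NeZero d := ⟨hd⟩
  rw [cycCompSum, dif_neg hd, ← map_valEmbedding_univ, powersetCard_map, sum_map]
  refine sum_congr rfl fun S hS => prod_cycGap α (card_pos.mp ?_)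
  rw [(mem_powersetCard.mp hS).2]
  exact hk

theorem sum_cycCompSum (α : ℕ → R) (d : ℕ) :
    ∑ k ∈ Icc 1 d, cycCompSum α d k = weightSum α d := by
  rw [weightSum, sum_powerset_erase_empty, card_range]
  exact sum_congr rfl fun k hk => cycCompSum_eq_sum_weight α d (mem_Icc.mp hk).1

theorem mk_weightSum_eq (α : ℕ → R) {f : R⟦X⟧}
    (hf : f = PowerSeries.mk fun i => if i = 0 then 0 else α i) :
    PowerSeries.mk (weightSum α) = X * d⁄dX R f + f * PowerSeries.mk (weightSum α) := by
  subst hf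
  ext n
  rw [map_add, coeff_X_mul_derivative_s3, coeff_mul, Nat.sum_antidiagonal_eq_sum_range_succ_mk]
  simp only [coeff_mk]
  rw [weightSum_eq_nsmul_add_sum, range_eq_Ico, sum_eq_sum_Ico_succ_bot n.succ_pos, zero_add,
    Nat.succ_eq_add_one, Ico_add_one_right_eq_Icc, if_pos rfl, zero_mul, zero_add, nsmul_eq_mul]
  congr 1
  · split_ifs with hn <;> simp [hn]
  · exact sum_congr rfl fun k hk => by rw [if_neg (Nat.one_le_iff_ne_zero.mp (mem_Icc.mp hk).1)]

end CyclicComposition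

open PowerSeries in
/-- With `f(t) = Σ_{i ≥ 1} α_i t^i` and `γ_d = Σ_{k ≥ 1} γ_{d,k}` (there are no cyclic
compositions of `d` into more than `d` parts, so `Σ_{k=1}^{d}` suffices), we have
`Σ_{d ≥ 1} γ_d t^d = t · f′(t) / (1 - f(t))` as formal power series, where the inverse
of `1 - f` exists since `f` has zero constant term (its constant coefficient is the
unit `1`, and we use the corresponding formal inverse `invOfUnit (1 - f) 1`). -/
theorem cyclic_composition_genfun_total {R : Type*} [CommRing R] (α : ℕ → R)
    (f : R⟦X⟧) (hf : f = mk fun i => if i = 0 then 0 else α i) :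
    mk (fun d => ∑ k ∈ Finset.Icc 1 d, cycCompSum α d k)
      = X * (derivative R f) * invOfUnit (1 - f) 1 := by
  have hunit : constantCoeff (1 - f) = ((1 : Rˣ) : R) := by simp [hf]
  calc mk (fun d => ∑ k ∈ Finset.Icc 1 d, cycCompSum α d k)
      = mk (CyclicComposition.weightSum α) := by simp_rw [CyclicComposition.sum_cycCompSum]
    _ = mk (CyclicComposition.weightSum α) * (1 - f) * invOfUnit (1 - f) 1 := by
        rw [mul_assoc, mul_invOfUnit _ _ hunit, mul_one]
    _ = X * (derivative R f) * invOfUnit (1 - f) 1 := by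
        rw [mul_one_sub, mul_comm _ f, sub_eq_of_eq_add (CyclicComposition.mk_weightSum_eq α hf)]
end

section
/- Let α_i = C_{i−1} + δ_{i,1}, where δ_{i,1} is the Kronecker delta and C_m is the m-th Catalan number. Then for every d ≥ 1, the central binomial coefficient satisfies binomial(2d, d) = Σ_𝒫 α_{a_1}·α_{a_2}⋯α_{a_k}, where the sum is over all cyclic compositions 𝒫 of d (into any number k ≥ 1 of parts) with part sizes a_1,…,a_k. -/
open Finset

theorem Nat.sInf_congr_of_forall_le {p q : ℕ → Prop} {N : ℕ} (hp : p N) (hq : q N)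
    (h : ∀ m ≤ N, p m ↔ q m) : sInf {m | p m} = sInf {m | q m} := by
  have hpN : sInf {m | p m} ≤ N := Nat.sInf_le hp
  have hqN : sInf {m | q m} ≤ N := Nat.sInf_le hq
  exact le_antisymm (Nat.sInf_le ((h _ hqN).2 (Nat.sInf_mem ⟨N, hq⟩)))
    (Nat.sInf_le ((h _ hpN).1 (Nat.sInf_mem ⟨N, hp⟩)))

theorem succ_mul_catalan_succ (n : ℕ) :
    (n + 2) * catalan (n + 1) = 2 * (2 * n + 1) * catalan n := by
  have h := Nat.succ_mul_centralBinom_succ n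
  rw [← succ_mul_catalan_eq_centralBinom, ← succ_mul_catalan_eq_centralBinom] at h
  refine Nat.eq_of_mul_eq_mul_left n.succ_pos ?_
  linarith

theorem two_mul_sum_antidiagonal_succ_mul_catalan (n : ℕ) :
    2 * ∑ p ∈ antidiagonal n, (p.2 + 1) * (catalan p.1 * catalan p.2)
      = (n + 2) * catalan (n + 1) := by
  have hswap : ∑ p ∈ antidiagonal n, (p.2 + 1) * (catalan p.1 * catalan p.2)
      = ∑ p ∈ antidiagonal n, (p.1 + 1) * (catalan p.1 * catalan p.2) := by
    rw [← Nat.sum_antidiagonal_swap]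
    exact sum_congr rfl fun p _ => by simp [mul_comm (catalan p.2)]
  rw [two_mul]
  nth_rw 2 [hswap]
  rw [← sum_add_distrib, catalan_succ', mul_sum]
  refine sum_congr rfl fun p hp => ?_
  rw [HasAntidiagonal.mem_antidiagonal] at hp
  rw [← add_mul]; congr 1; omega

theorem sum_antidiagonal_catalan_mul_catalan_succ (n : ℕ) :
    ∑ p ∈ antidiagonal n, catalan p.2 * catalan (p.1 + 1) + catalan (n + 1)
      = catalan (n + 2) := by
  rw [catalan_succ' (n + 1), Nat.sum_antidiagonal_succ, catalan_zero, one_mul, add_comm]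
  simp only [mul_comm]

theorem sum_antidiagonal_ite_snd_eq_zero (f : ℕ → ℕ) (n : ℕ) :
    ∑ p ∈ antidiagonal n, (if p.2 = 0 then f p.1 else 0) = f n := by
  rw [sum_eq_single (n, 0)] <;> aesop

theorem sum_antidiagonal_mul_catalan_eq_centralBinom {α : ℕ → ℕ}
    (hα : ∀ k, α (k + 1) = catalan k + if k = 0 then 1 else 0) (n : ℕ) :
    ∑ p ∈ antidiagonal n, (p.2 + 1) * α (p.2 + 1) * catalan (p.1 + 1)
      = (n + 1).centralBinom := by
  have hsplit : ∑ p ∈ antidiagonal n, (p.2 + 1) * α (p.2 + 1) * catalan (p.1 + 1)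
      = ∑ p ∈ antidiagonal n, (p.2 + 1) * (catalan (p.1 + 1) * catalan p.2)
          + catalan (n + 1) := by
    rw [← sum_antidiagonal_ite_snd_eq_zero (fun m => catalan (m + 1)), ← sum_add_distrib]
    refine sum_congr rfl fun p _ => ?_
    rw [hα]
    split_ifs with h
    · rw [h]; ring
    · ring
  have hsum := two_mul_sum_antidiagonal_succ_mul_catalan (n + 1)
  rw [Nat.sum_antidiagonal_succ, catalan_zero] at hsum
  have hrec := succ_mul_catalan_succ (n + 1)
  rw [hsplit, ← succ_mul_catalan_eq_centralBinom]
  linarith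

noncomputable def gapAfter (B : Finset ℕ) (t : ℕ) : ℕ :=
  sInf {g | 0 < g ∧ t + g ∈ B}

theorem gapAfter_eq_sub {B : Finset ℕ} {t v : ℕ} (htv : t < v) (hv : v ∈ B)
    (hnext : ∀ u ∈ B, t < u → v ≤ u) : gapAfter B t = v - t := by
  have hmem : v - t ∈ {g | 0 < g ∧ t + g ∈ B} :=
    ⟨by omega, by rwa [Nat.add_sub_cancel' htv.le]⟩
  refine le_antisymm (Nat.sInf_le hmem) (le_csInf ⟨_, hmem⟩ fun g ⟨hg, hgB⟩ => ?_)
  have := hnext _ hgB (by omega)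
  omega

theorem gapAfter_insert_of_lt {B : Finset ℕ} {t u v : ℕ} (htu : t < u) (hu : u ∈ B)
    (huv : u ≤ v) : gapAfter (insert v B) t = gapAfter B t := by
  refine Nat.sInf_congr_of_forall_le (N := u - t) ?_ ?_ fun g hg => ?_
  · exact ⟨by omega, mem_insert_of_mem (by rwa [Nat.add_sub_cancel' htu.le])⟩
  · exact ⟨by omega, by rwa [Nat.add_sub_cancel' htu.le]⟩
  · rw [mem_insert]
    constructor
    · rintro ⟨hg0, rfl | h⟩
      · exact ⟨hg0, by rwa [show t + g = u by omega]⟩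
      · exact ⟨hg0, h⟩
    · exact fun ⟨hg0, h⟩ => ⟨hg0, Or.inr h⟩

/-- A composition of `n` is encoded by the set of left endpoints of its blocks, so `0 ∈ B`
except for the empty composition of `0`. -/
def compositionSets (n : ℕ) : Finset (Finset ℕ) :=
  (range n).powerset.filter fun B => 0 ∈ insert n B

theorem mem_compositionSets {n : ℕ} {B : Finset ℕ} :
    B ∈ compositionSets n ↔ (∀ t ∈ B, t < n) ∧ 0 ∈ insert n B := by
  simp [compositionSets, subset_iff]

noncomputable def compositionWeight (α : ℕ → ℕ) (n : ℕ) (B : Finset ℕ) : ℕ :=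
  ∏ t ∈ B, α (gapAfter (insert n B) t)

theorem sup_insert_of_mem_compositionSets {m : ℕ} {B : Finset ℕ}
    (hB : B ∈ compositionSets m) : (insert m B).sup id = m :=
  le_antisymm (Finset.sup_le fun t ht => by
    rcases mem_insert.1 ht with rfl | ht
    · exact le_rfl
    · exact (mem_compositionSets.1 hB).1 t ht |>.le) (le_sup (f := id) (mem_insert_self m B))

theorem sup_id_mem_of_mem_compositionSets_succ {n : ℕ} {B : Finset ℕ}
    (hB : B ∈ compositionSets (n + 1)) : B.sup id ∈ B := by
  have h0 : 0 ∈ B := by simpa using (mem_compositionSets.1 hB).2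
  simpa using sup_mem_of_nonempty (f := id) ⟨0, h0⟩

theorem sum_compositionSets_succ {M : Type*} [AddCommMonoid M] (f : Finset ℕ → M) (n : ℕ) :
    ∑ B ∈ compositionSets (n + 1), f B
      = ∑ p ∈ antidiagonal n, ∑ B ∈ compositionSets p.1, f (insert p.1 B) := by
  rw [sum_sigma']
  symm
  refine sum_bij' (fun x _ => insert x.1.1 x.2)
    (fun B _ => ⟨(B.sup id, n - B.sup id), B.erase (B.sup id)⟩) ?_ ?_ ?_ ?_ fun _ _ => rfl
  · rintro ⟨⟨m, k⟩, B⟩ hx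
    simp only [mem_sigma, HasAntidiagonal.mem_antidiagonal, mem_compositionSets] at hx ⊢
    obtain ⟨hmk, hB, h0⟩ := hx
    refine ⟨fun t ht => ?_, mem_insert_of_mem h0⟩
    rcases mem_insert.1 ht with rfl | ht
    · omega
    · have := hB t ht; omega
  · intro B hB
    have hsup := sup_id_mem_of_mem_compositionSets_succ hB
    obtain ⟨hB, h0⟩ := mem_compositionSets.1 hB
    have h0 : 0 ∈ B := by simpa using h0
    simp only [mem_sigma, HasAntidiagonal.mem_antidiagonal, mem_compositionSets]
    refine ⟨by have := hB _ hsup; omega, fun t ht => ?_, ?_⟩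
    · exact lt_of_le_of_ne (le_sup (f := id) (mem_of_mem_erase ht)) (ne_of_mem_erase ht)
    · by_cases h : B.sup id = 0
      · simp [h]
      · exact mem_insert_of_mem (mem_erase.2 ⟨Ne.symm h, h0⟩)
  · rintro ⟨⟨m, k⟩, B⟩ hx
    simp only [mem_sigma, HasAntidiagonal.mem_antidiagonal] at hx
    have hm : m ∉ B := fun h => (lt_irrefl m) ((mem_compositionSets.1 hx.2).1 m h)
    simp only [sup_insert_of_mem_compositionSets hx.2, erase_insert hm]
    congr; omega
  · intro B hB
    exact insert_erase (sup_id_mem_of_mem_compositionSets_succ hB)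

theorem compositionWeight_insert (α : ℕ → ℕ) {m v : ℕ} {B : Finset ℕ}
    (hB : B ∈ compositionSets m) (hmv : m < v) :
    compositionWeight α v (insert m B) = α (v - m) * compositionWeight α m B := by
  have hBm := (mem_compositionSets.1 hB).1
  have hm : m ∉ B := fun h => lt_irrefl m (hBm m h)
  unfold compositionWeight
  rw [prod_insert hm]
  congr 1
  · rw [gapAfter_eq_sub hmv (mem_insert_self v _) fun u hu hmu => ?_]
    rcases mem_insert.1 hu with rfl | hu
    · exact le_rfl
    · rcases mem_insert.1 hu with rfl | hu
      · omega
      · exact absurd (hBm u hu) (by omega)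
  · exact prod_congr rfl fun t ht =>
      congrArg α (gapAfter_insert_of_lt (hBm t ht) (mem_insert_self m B) hmv.le)

theorem sum_compositionWeight {α : ℕ → ℕ}
    (hα : ∀ k, α (k + 1) = catalan k + if k = 0 then 1 else 0) (n : ℕ) :
    ∑ B ∈ compositionSets n, compositionWeight α n B = catalan (n + 1) := by
  induction n using Nat.strong_induction_on with
  | _ n ih =>
    rcases n with _ | n
    · simp [compositionSets, compositionWeight]
    rw [sum_compositionSets_succ, ← sum_antidiagonal_catalan_mul_catalan_succ,
      ← sum_antidiagonal_ite_snd_eq_zero (fun m => catalan (m + 1)), ← sum_add_distrib]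
    refine sum_congr rfl fun p hp => ?_
    rw [HasAntidiagonal.mem_antidiagonal] at hp
    have hweight : ∀ B ∈ compositionSets p.1,
        compositionWeight α (n + 1) (insert p.1 B) = α (p.2 + 1) * compositionWeight α p.1 B :=
      fun B hB => by rw [compositionWeight_insert α hB (by omega)]; congr 2; omega
    rw [sum_congr rfl hweight, ← mul_sum, ih p.1 (by omega), hα]
    split_ifs <;> ring

theorem sum_sub_sup_mul_compositionWeight {α : ℕ → ℕ}
    (hα : ∀ k, α (k + 1) = catalan k + if k = 0 then 1 else 0) (n : ℕ) :
    ∑ B ∈ compositionSets (n + 1), (n + 1 - B.sup id) * compositionWeight α (n + 1) B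
      = ∑ p ∈ antidiagonal n, (p.2 + 1) * α (p.2 + 1) * catalan (p.1 + 1) := by
  rw [sum_compositionSets_succ]
  refine sum_congr rfl fun p hp => ?_
  rw [HasAntidiagonal.mem_antidiagonal] at hp
  have hB : ∀ B ∈ compositionSets p.1,
      (n + 1 - (insert p.1 B).sup id) * compositionWeight α (n + 1) (insert p.1 B)
        = (p.2 + 1) * α (p.2 + 1) * compositionWeight α p.1 B := fun B hB => by
    rw [sup_insert_of_mem_compositionSets hB, compositionWeight_insert α hB (by omega),
      show n + 1 - p.1 = p.2 + 1 by omega, mul_assoc]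
  rw [sum_congr rfl hB, ← mul_sum, sum_compositionWeight hα]

theorem ZMod.val_add_natCast_of_lt {d : ℕ} [NeZero d] {s : ZMod d} {j : ℕ}
    (h : s.val + j < d) : (s + j).val = s.val + j := by
  rw [ZMod.val_add_of_lt] <;> rw [ZMod.val_cast_of_lt (by omega)]
  exact h

theorem ZMod.inf'_val_image_add_natCast {d : ℕ} [NeZero d] {S : Finset (ZMod d)} {j : ℕ}
    (h0 : 0 ∈ S) (hj : S.sup ZMod.val + j < d) (h : (S.image (· + (j : ZMod d))).Nonempty) :
    (S.image (· + (j : ZMod d))).inf' h ZMod.val = j := by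
  have hval : ∀ s ∈ S, (s + j).val = s.val + j := fun s hs =>
    ZMod.val_add_natCast_of_lt (by have := le_sup (f := ZMod.val) hs; omega)
  refine le_antisymm (inf'_le_of_le _ (mem_image_of_mem _ h0) ?_)
    (le_inf' _ _ (forall_mem_image.2 fun s hs => ?_))
  · rw [hval 0 h0, ZMod.val_zero, zero_add]
  · simp only [hval s hs]; omega

theorem ZMod.sup_val_image_sub_add_lt {d : ℕ} [NeZero d] {T : Finset (ZMod d)} {t₀ : ZMod d}
    (hmin : ∀ t ∈ T, t₀.val ≤ t.val) :
    (T.image (· - t₀)).sup ZMod.val + t₀.val < d := by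
  suffices (T.image (· - t₀)).sup ZMod.val < d - t₀.val by omega
  rw [Finset.sup_lt_iff (Nat.sub_pos_of_lt (ZMod.val_lt t₀))]
  refine forall_mem_image.2 fun t ht => ?_
  have htd := ZMod.val_lt t
  have ht₀t := hmin t ht
  rw [ZMod.val_sub ht₀t]
  omega

noncomputable def cycWeight (α : ℕ → ℕ) (d : ℕ) (S : Finset (ZMod d)) : ℕ :=
  ∏ s ∈ S, α (cycGap d S s)

theorem cycGap_image_add_right {d : ℕ} (S : Finset (ZMod d)) (s c : ZMod d) :
    cycGap d (S.image (· + c)) (s + c) = cycGap d S s := by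
  simp only [cycGap, mem_image, add_right_comm s c, add_left_inj, exists_eq_right]

theorem cycWeight_image_add_right (α : ℕ → ℕ) {d : ℕ} (S : Finset (ZMod d)) (c : ZMod d) :
    cycWeight α d (S.image (· + c)) = cycWeight α d S := by
  unfold cycWeight
  rw [prod_image (add_left_injective c).injOn]
  exact prod_congr rfl fun s _ => by rw [cycGap_image_add_right]

theorem sum_cycWeight_eq_sum_zero_mem (α : ℕ → ℕ) (d : ℕ) [NeZero d] :
    ∑ S ∈ univ.filter (fun S : Finset (ZMod d) => S.Nonempty), cycWeight α d S
      = ∑ S ∈ univ.filter (fun S : Finset (ZMod d) => 0 ∈ S),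
          (d - S.sup ZMod.val) * cycWeight α d S := by
  have hrot : ∀ S : Finset (ZMod d), (d - S.sup ZMod.val) * cycWeight α d S
      = ∑ j ∈ range (d - S.sup ZMod.val), cycWeight α d (S.image (· + (j : ZMod d))) := by
    intro S; simp only [cycWeight_image_add_right, sum_const, card_range, smul_eq_mul]
  rw [sum_congr rfl fun S _ => hrot S, sum_sigma']
  symm
  -- `(S₀, j) ↦ S₀ + j`, with inverse `S ↦ (S - min S, min S)`
  refine sum_bij' (fun x _ => x.1.image (· + (x.2 : ZMod d)))
    (fun T hT => ⟨T.image (· - ((T.inf' (mem_filter.1 hT).2 ZMod.val : ℕ) : ZMod d)),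
      T.inf' (mem_filter.1 hT).2 ZMod.val⟩) ?_ ?_ ?_ ?_ fun _ _ => rfl
  · rintro ⟨S, j⟩ hx
    simp only [mem_sigma, mem_filter, mem_univ, true_and] at hx
    simp only [mem_filter, mem_univ, true_and]
    exact ⟨_, mem_image_of_mem _ hx.1⟩
  · intro T hT
    have hne := (mem_filter.1 hT).2
    obtain ⟨t₀, ht₀, hmin⟩ := exists_mem_eq_inf' hne ZMod.val
    rw [hmin, ZMod.natCast_zmod_val]
    simp only [mem_sigma, mem_filter, mem_univ, true_and, mem_range, mem_image]
    have := ZMod.sup_val_image_sub_add_lt fun t ht => hmin ▸ inf'_le ZMod.val ht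
    exact ⟨⟨t₀, ht₀, sub_self t₀⟩, by omega⟩
  · rintro ⟨S, j⟩ hx
    obtain ⟨h0, hj⟩ : 0 ∈ S ∧ j < d - S.sup ZMod.val := by simpa using hx
    dsimp only
    rw [ZMod.inf'_val_image_add_natCast h0 (by omega)]
    simp only [image_image, Function.comp_def, add_sub_cancel_right, image_id']
  · intro T hT
    simp [image_image, Function.comp_def]

theorem cycGap_eq_gapAfter {d : ℕ} [NeZero d] {S : Finset (ZMod d)} (h0 : 0 ∈ S)
    (s : ZMod d) : cycGap d S s = gapAfter (insert d (S.image ZMod.val)) s.val := by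
  have hs := ZMod.val_lt s
  have hwrap : s + ((d - s.val : ℕ) : ZMod d) = 0 := by
    rw [Nat.cast_sub hs.le, ZMod.natCast_self, ZMod.natCast_zmod_val, add_sub_cancel]
  refine Nat.sInf_congr_of_forall_le (N := d - s.val) ⟨by omega, hwrap ▸ h0⟩
    ⟨by omega, mem_insert.2 (.inl (by omega))⟩ fun g hg => and_congr_right fun hg0 => ?_
  rcases hg.lt_or_eq with hg | rfl
  · rw [mem_insert, mem_image, ← ZMod.val_add_natCast_of_lt (by omega)]
    constructor
    · exact fun h => .inr ⟨_, h, rfl⟩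
    · rintro (h | ⟨t, ht, htv⟩)
      · exact absurd h (ZMod.val_lt _).ne
      · rwa [← ZMod.val_injective d htv]
  · exact iff_of_true (hwrap ▸ h0) (mem_insert.2 (.inl (by omega)))

theorem sum_zero_mem_eq_sum_compositionSets (α : ℕ → ℕ) (d : ℕ) [NeZero d] :
    ∑ S ∈ univ.filter (fun S : Finset (ZMod d) => 0 ∈ S),
        (d - S.sup ZMod.val) * cycWeight α d S
      = ∑ B ∈ compositionSets d, (d - B.sup id) * compositionWeight α d B := by
  refine sum_nbij' (image ZMod.val) (image Nat.cast) ?_ ?_ ?_ ?_ ?_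
  · intro S hS
    simp only [mem_filter, mem_univ, true_and] at hS
    simp only [mem_compositionSets, forall_mem_image]
    exact ⟨fun s _ => ZMod.val_lt s, mem_insert_of_mem (mem_image.2 ⟨0, hS, ZMod.val_zero⟩)⟩
  · intro B hB
    simp only [mem_compositionSets] at hB
    simp only [mem_filter, mem_univ, true_and, mem_image]
    exact ⟨0, by simpa [NeZero.ne' d] using hB.2, Nat.cast_zero⟩
  · intro S _
    simp [image_image, Function.comp_def]
  · intro B hB
    simp only [mem_compositionSets] at hB
    rw [image_image]
    exact (image_congr fun t ht => ZMod.val_cast_of_lt (hB.1 t ht)).trans image_id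
  · intro S hS
    simp only [mem_filter, mem_univ, true_and] at hS
    rw [sup_image, Function.id_comp, compositionWeight, cycWeight,
      prod_image (ZMod.val_injective d).injOn]
    exact congrArg _ (prod_congr rfl fun s _ => congrArg α (cycGap_eq_gapAfter hS s))

/-- Let `α_i = C_{i-1} + δ_{i,1}` (Catalan number plus Kronecker delta).  Then for
`d ≥ 1`, `binomial (2d) d = Σ_𝒫 α_{a_1} ⋯ α_{a_k}`, summed over all cyclic
compositions `𝒫` of `d` into any number `k ≥ 1` of parts. -/
theorem central_binomial_eq_cyclic_composition_sum (d : ℕ) [NeZero d] (α : ℕ → ℕ)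
    (hα : ∀ i, α i = catalan (i - 1) + if i = 1 then 1 else 0) :
    (2 * d).choose d
      = ∑ S ∈ (Finset.univ : Finset (ZMod d)).powerset.filter (fun S => S.Nonempty),
          ∏ s ∈ S, α (cycGap d S s) := by
  replace hα : ∀ k, α (k + 1) = catalan k + if k = 0 then 1 else 0 := fun k => by simp [hα]
  obtain ⟨n, rfl⟩ := Nat.exists_eq_succ_of_ne_zero (NeZero.ne d)
  calc (2 * (n + 1)).choose (n + 1)
      = ∑ B ∈ compositionSets (n + 1), (n + 1 - B.sup id) * compositionWeight α (n + 1) B := by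
        rw [sum_sub_sup_mul_compositionWeight hα, sum_antidiagonal_mul_catalan_eq_centralBinom hα,
          Nat.centralBinom_eq_two_mul_choose]
    _ = ∑ S ∈ univ.filter (fun S : Finset (ZMod (n + 1)) => S.Nonempty),
          cycWeight α (n + 1) S := by
        rw [sum_cycWeight_eq_sum_zero_mem, sum_zero_mem_eq_sum_compositionSets]
    _ = _ := by rw [powerset_univ]; rfl
end

section
/- For d ≥ k ≥ 1, d · Σ_{(a_1,…,a_k)} C_{a_1−1}·C_{a_2−1}⋯C_{a_k−1} = k · binomial(2d−k−1, d−1), where the sum is over all compositions (a_1,…,a_k) of d into k parts. -/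
/-!
Let `B = X·C(X)`, where `C` is the Catalan series. The sum over compositions of `d` into `k`
parts is the coefficient of `X^d` in `B^k`. From `C = 1 + X·C²` we get `B = X + B²`, hence
`[X^(d+1)] B^(k+1) = [X^d] B^k + [X^(d+1)] B^(k+2)`. The ballot numbers
`binom(2d-k-1, d-1) - binom(2d-k-1, d)` satisfy the same recurrence by Pascal's rule and the same
boundary values at `k = 0` and `k = d`, and `d·binom(n, d) = (d-k)·binom(n, d-1)` for
`n = 2d-k-1` turns the ballot number times `d` into `k·binom(2d-k-1, d-1)`.
-/

open Finset

namespace PowerSeries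

section Compositions

variable {R : Type*} [CommSemiring R]

theorem coeff_pow_eq_sum_piAntidiag (F : R⟦X⟧) (k d : ℕ) :
    coeff d (F ^ k) = ∑ f ∈ piAntidiag (univ : Finset (Fin k)) d, ∏ i, coeff (f i) F := by
  classical
  rw [← Fin.prod_const, coeff_prod, finsuppAntidiag, sum_map, ← sum_attach (piAntidiag _ _)]
  rfl

theorem coeff_pow_eq_sum_compositions {F : R⟦X⟧} (hF : constantCoeff F = 0) (d k : ℕ) :
    coeff d (F ^ k) = ∑ c ∈ univ.filter (fun c : Composition d => c.length = k),
      (c.blocks.map (coeff · F)).prod := by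
  classical
  rw [coeff_pow_eq_sum_piAntidiag,
    ← sum_filter_of_ne (p := fun f : Fin k → ℕ => ∀ i, f i ≠ 0) fun f _ hf i hi =>
      hf (prod_eq_zero (mem_univ i) (by rw [hi, coeff_zero_eq_constantCoeff_apply, hF]))]
  refine sum_bij (fun f hf => ⟨List.ofFn f, ?_, ?_⟩) ?_ ?_ ?_ ?_
  · simp only [mem_filter, mem_piAntidiag] at hf
    simpa [List.mem_ofFn, Nat.pos_iff_ne_zero] using hf.2
  · simp only [mem_filter, mem_piAntidiag] at hf
    rw [List.sum_ofFn, hf.1.1]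
  · intro f _
    simp [Composition.length]
  · intro f _ g _ hfg
    exact List.ofFn_injective (congrArg Composition.blocks hfg)
  · intro c hc
    obtain rfl : c.length = k := (mem_filter.mp hc).2
    refine ⟨c.blocksFun, ?_, Composition.ext c.ofFn_blocksFun⟩
    simp [c.sum_blocksFun, fun i => Nat.one_le_iff_ne_zero.mp (c.one_le_blocksFun i)]
  · intro f hf
    simp [List.map_ofFn, List.prod_ofFn]

end Compositions

theorem X_mul_catalanSeries_eq : X * catalanSeries = X + (X * catalanSeries) ^ 2 := by
  nth_rw 1 [← catalanSeries_sq_mul_X_add_one]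
  ring

theorem coeff_X_mul_catalanSeries {n : ℕ} (hn : 0 < n) :
    coeff n (X * catalanSeries) = catalan (n - 1) := by
  obtain ⟨m, rfl⟩ := Nat.exists_eq_add_of_lt hn
  rw [coeff_succ_X_mul, catalanSeries_coeff, zero_add, Nat.add_sub_cancel]

theorem coeff_X_mul_catalanSeries_pow_self (d : ℕ) :
    coeff d ((X * catalanSeries) ^ d) = 1 := by
  rw [mul_pow, coeff_X_pow_mul', if_pos le_rfl, Nat.sub_self, coeff_zero_eq_constantCoeff_apply]
  simp

theorem coeff_succ_X_mul_catalanSeries_pow_succ (d k : ℕ) :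
    coeff (d + 1) ((X * catalanSeries) ^ (k + 1)) =
      coeff d ((X * catalanSeries) ^ k) + coeff (d + 1) ((X * catalanSeries) ^ (k + 2)) := by
  have h : (X * catalanSeries) ^ (k + 1) =
      X * (X * catalanSeries) ^ k + (X * catalanSeries) ^ (k + 2) := by
    rw [pow_succ]; nth_rw 2 [X_mul_catalanSeries_eq]; ring
  rw [h, map_add, coeff_succ_X_mul]

/- The ballot number `binom(n, d-1) - binom(n, d)`, `n = 2d - k - 1`, written additively to avoid
truncated subtraction. The induction runs over the row `n`: both terms of the recurrence lie in
row `n - 1`. -/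
theorem coeff_X_mul_catalanSeries_pow_add_choose {d k : ℕ} (hd : 1 ≤ d) (hk : k ≤ d) :
    coeff d ((X * catalanSeries) ^ k) + (2 * d - k - 1).choose d =
      (2 * d - k - 1).choose (d - 1) := by
  suffices ∀ n d k, 2 * d = n + k + 1 → k ≤ d →
      coeff d ((X * catalanSeries) ^ k) + n.choose d = n.choose (d - 1) from
    this _ d k (by omega) hk
  intro n
  induction n using Nat.strong_induction_on with
  | _ n ih =>
  intro d k hn hk
  rcases hk.eq_or_lt with rfl | hkd
  · rw [coeff_X_mul_catalanSeries_pow_self, Nat.choose_eq_zero_of_lt (by omega),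
      show k - 1 = n by omega, Nat.choose_self]
  obtain ⟨e, rfl⟩ : ∃ e, d = e + 1 := ⟨d - 1, by omega⟩
  rcases k with _ | k
  · obtain rfl : n = 2 * e + 1 := by omega
    rw [pow_zero, coeff_one, if_neg e.succ_ne_zero, zero_add, Nat.choose_symm_half,
      Nat.add_sub_cancel]
  obtain ⟨m, rfl⟩ : ∃ m, n = m + 1 := ⟨n - 1, by omega⟩
  obtain ⟨e, rfl⟩ : ∃ e', e = e' + 1 := ⟨e - 1, by omega⟩
  have h₁ : coeff (e + 1) ((X * catalanSeries) ^ k) + m.choose (e + 1) = m.choose e :=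
    ih m (by omega) (e + 1) k (by omega) (by omega)
  have h₂ : coeff (e + 1 + 1) ((X * catalanSeries) ^ (k + 2)) + m.choose (e + 1 + 1) =
      m.choose (e + 1) :=
    ih m (by omega) (e + 2) (k + 2) (by omega) (by omega)
  rw [coeff_succ_X_mul_catalanSeries_pow_succ, Nat.add_sub_cancel, Nat.choose_succ_succ',
    Nat.choose_succ_succ']
  omega

theorem mul_coeff_X_mul_catalanSeries_pow {d k : ℕ} (hk : k ≤ d) :
    d * coeff d ((X * catalanSeries) ^ k) = k * (2 * d - k - 1).choose (d - 1) := by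
  rcases Nat.eq_zero_or_pos d with rfl | hd
  · obtain rfl : k = 0 := by omega
    simp
  have hsum := coeff_X_mul_catalanSeries_pow_add_choose hd hk
  have hratio := Nat.choose_succ_right_eq (2 * d - k - 1) (d - 1)
  rw [Nat.sub_add_cancel hd, show 2 * d - k - 1 - (d - 1) = d - k by omega] at hratio
  obtain ⟨e, rfl⟩ : ∃ e, d = k + e := ⟨d - k, by omega⟩
  rw [Nat.add_sub_cancel_left] at hratio
  nlinarith

end PowerSeries

open PowerSeries

theorem composition_catalan_sum_general (d k : ℕ) (hkd : k ≤ d) :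
    d * ∑ c ∈ Finset.univ.filter (fun c : Composition d => c.length = k),
          (c.blocks.map fun a => catalan (a - 1)).prod
      = k * (2 * d - k - 1).choose (d - 1) := by
  have hblocks (c : Composition d) : c.blocks.map (fun a => catalan (a - 1)) =
      c.blocks.map (coeff · (X * catalanSeries)) :=
    List.map_congr_left fun a ha => (coeff_X_mul_catalanSeries (c.blocks_pos ha)).symm
  simp_rw [hblocks, ← coeff_pow_eq_sum_compositions (F := X * catalanSeries) (by simp) d k]
  exact mul_coeff_X_mul_catalanSeries_pow hkd

/-- For `d ≥ k ≥ 1`,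
`d · Σ_{(a_1,…,a_k)} C_{a_1-1} ⋯ C_{a_k-1} = k · binomial (2d-k-1) (d-1)`,
where the sum ranges over all compositions `(a_1, …, a_k)` of `d` into `k` parts. -/
theorem composition_catalan_sum (d k : ℕ) (hk : 1 ≤ k) (hkd : k ≤ d) :
    d * ∑ c ∈ Finset.univ.filter (fun c : Composition d => c.length = k),
          (c.blocks.map fun a => catalan (a - 1)).prod
      = k * (2 * d - k - 1).choose (d - 1) :=
  composition_catalan_sum_general d k hkd
end

section
/- The number of 312-avoiding affine permutations in the affine symmetric group on d letters equals binomial(2d−1, d). -/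
/-- An affine permutation in `S̃_d` is a bijection `π : ℤ → ℤ` with
`π (i + d) = π i + d` for all `i` and `Σ_{i=0}^{d-1} (π i - i) = 0`. -/
def IsAffinePerm (d : ℕ) (π : ℤ ≃ ℤ) : Prop :=
  (∀ i : ℤ, π (i + d) = π i + d) ∧ ∑ i ∈ Finset.range d, (π i - i) = 0

/-- A bijection `π : ℤ → ℤ` is 312-avoiding if there are no integers `i < j < k`
with `π j < π k < π i`. -/
def Avoids312Z (π : ℤ ≃ ℤ) : Prop :=
  ¬ ∃ i j k : ℤ, i < j ∧ j < k ∧ π j < π k ∧ π k < π i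

/-!
A 312-avoiding affine permutation `π` is determined by its left code `e`: the positions `j < k`
with `π j > π k` form the interval `[k - e k, k)`, these intervals are nested, and `e` is
`d`-periodic. Conversely every nested periodic code comes from exactly one affine permutation,
`k ↦ k + #{j > k | k ∈ [j - e j, j)} - e k`, and it avoids 312. Nested intervals match like
parentheses, so a code is recovered from the multiset of left endpoints `k - e k` (`k` in one
period) reduced mod `d`, and every multiset of size `d` on `ℤ/d` arises; there are
`binomial (2d-1) d` of them.
-/

open Finset Function

theorem Int.sum_Ico_consecutive {M : Type*} [AddCommMonoid M] (f : ℤ → M) {a b c : ℤ}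
    (hab : a ≤ b) (hbc : b ≤ c) :
    ∑ i ∈ Ico a b, f i + ∑ i ∈ Ico b c, f i = ∑ i ∈ Ico a c, f i := by
  rw [← sum_union (Ico_disjoint_Ico_consecutive a b c), Ico_union_Ico_eq_Ico hab hbc]

theorem Int.sum_Ico_eq_sum_range {M : Type*} [AddCommMonoid M] (f : ℤ → M) (a : ℤ) (n : ℕ) :
    ∑ i ∈ Ico a (a + n), f i = ∑ k ∈ Finset.range n, f (a + k) := by
  refine sum_nbij' (fun i => (i - a).toNat) (fun k => a + k) ?_ ?_ ?_ ?_ ?_ <;> intro x hx <;>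
    simp only [mem_Ico, Finset.mem_range] at hx ⊢
  all_goals first | omega | (congr 1; omega)

namespace ZMod

theorem intCast_eq_intCast_iff_of_abs_sub_lt {d : ℕ} {a b : ℤ} (h : |a - b| < d) :
    (a : ZMod d) = b ↔ a = b := by
  refine ⟨fun hab => ?_, congrArg _⟩
  have := Int.eq_zero_of_abs_lt_dvd ((intCast_eq_intCast_iff_dvd_sub b a d).1 hab.symm) h
  omega

theorem sum_Ico_intCast {d : ℕ} [NeZero d] {M : Type*} [AddCommMonoid M] (f : ZMod d → M)
    (a : ℤ) :
    ∑ i ∈ Ico a (a + d), f i = ∑ x, f x := by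
  have hinj : Set.InjOn (fun i : ℤ => (i : ZMod d)) (Ico a (a + d)) := by
    intro i hi j hj hij
    simp only [coe_Ico, Set.mem_Ico] at hi hj
    exact (intCast_eq_intCast_iff_of_abs_sub_lt (by rw [abs_lt]; omega)).1 hij
  rw [← sum_image (g := fun i : ℤ => (i : ZMod d)) hinj]
  congr
  apply eq_univ_of_card
  rw [card_image_of_injOn hinj, Int.card_Ico, ZMod.card]
  omega

end ZMod

theorem Function.Periodic.eq_val_intCast {M : Type*} {d : ℕ} [NeZero d] {g : ℤ → M}
    (hg : Periodic g d) (i : ℤ) : g i = g ((i : ZMod d).val) := by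
  rw [ZMod.val_intCast]
  conv_lhs => rw [← Int.emod_add_ediv_mul i d]
  exact hg.int_mul (i / d) (i % d)

theorem Function.Periodic.sum_Ico_eq {M : Type*} [AddCommMonoid M] {d : ℕ} [NeZero d]
    {g : ℤ → M} (hg : Periodic g d) (a b : ℤ) :
    ∑ i ∈ Ico a (a + d), g i = ∑ i ∈ Ico b (b + d), g i := by
  have key : ∀ a : ℤ, ∑ i ∈ Ico a (a + d), g i = ∑ x : ZMod d, g x.val := fun a => by
    rw [← ZMod.sum_Ico_intCast (fun x : ZMod d => g x.val) a]
    exact sum_congr rfl fun i _ => hg.eq_val_intCast i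
  rw [key, key]

theorem Int.map_add_mul_of_map_add {d : ℤ} {f : ℤ → ℤ} (hf : ∀ k, f (k + d) = f k + d)
    (m k : ℤ) : f (k + m * d) = f k + m * d := by
  have hper : Periodic (fun k => f k - k) d := fun k => by
    show f (k + d) - (k + d) = f k - k
    rw [hf]; ring
  have : f (k + m * d) - (k + m * d) = f k - k := hper.int_mul m k
  linarith

theorem Int.surjective_of_injective_of_map_add {d : ℕ} [NeZero d] {f : ℤ → ℤ}
    (hf : ∀ k, f (k + d) = f k + d) (hinj : Injective f) : Surjective f := by
  have hmul := Int.map_add_mul_of_map_add hf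
  have hval : ∀ x : ZMod d, ((x.val : ℤ) : ZMod d) = x := fun x => by simp
  have hdvd : ∀ a b : ℤ, (a : ZMod d) = b → ∃ m : ℤ, b = a + m * d := fun a b h => by
    obtain ⟨m, hm⟩ := (ZMod.intCast_eq_intCast_iff_dvd_sub a b d).1 h
    exact ⟨m, by linarith⟩
  let φ : ZMod d → ZMod d := fun x => (f x.val : ZMod d)
  have hφ : Injective φ := by
    intro x y hxy
    obtain ⟨m, hm⟩ := hdvd _ _ hxy
    rw [← hmul] at hm
    rw [← hval x, ← hval y, hinj hm]
    simp
  intro v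
  obtain ⟨x, hx⟩ := (Finite.injective_iff_surjective.1 hφ) (v : ZMod d)
  obtain ⟨m, hm⟩ := hdvd _ _ hx
  exact ⟨x.val + m * d, by rw [hmul, hm]⟩

theorem Int.exists_add_const_of_lt_iff_lt {π σ : ℤ ≃ ℤ}
    (h : ∀ i k, π i < π k ↔ σ i < σ k) : ∃ c, ∀ k, σ k = π k + c := by
  let τ : ℤ ≃o ℤ := StrictMono.orderIsoOfSurjective (π.symm.trans σ)
    (fun u v huv => by simpa using (h (π.symm u) (π.symm v)).1 (by simpa using huv))
    (π.symm.trans σ).surjective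
  have hsucc : ∀ n, τ (n + 1) = τ n + 1 := fun n => by
    simpa [Order.succ_eq_add_one] using τ.toInitialSeg.map_succ n
  have hτ : ∀ n, τ n = n + τ 0 := fun n => by
    induction n using Int.induction_on with
    | zero => simp
    | succ n ih => rw [hsucc, ih]; ring
    | pred n ih =>
      have := hsucc (-n - 1)
      rw [sub_add_cancel] at this
      omega
  exact ⟨τ 0, fun k => by simpa [τ] using hτ (π k)⟩

namespace Affine312

/-- `e k` stands for the interval `[k - e k, k]`; `nested` says that two such intervals are
nested or disjoint. -/
structure IsNestedCode (d : ℕ) (e : ℤ → ℕ) : Prop where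
  periodic : Periodic e d
  nested : ∀ ⦃j k : ℤ⦄, k < j → j - e j ≤ k → j - e j ≤ k - e k

def HasLeftCode (f : ℤ → ℤ) (e : ℤ → ℕ) : Prop :=
  ∀ ⦃j k : ℤ⦄, j < k → (f k < f j ↔ k - e k ≤ j)

/-- `sInf ∅ = 0`, but for affine `π` the set contains `d - 1`, since `π (k - d) = π k - d`. -/
noncomputable def leftCode (π : ℤ ≃ ℤ) (k : ℤ) : ℕ :=
  sInf {n : ℕ | π (k - n - 1) < π k}

variable {d : ℕ} {e : ℤ → ℕ}

theorem IsNestedCode.lt [NeZero d] (he : IsNestedCode d e) (k : ℤ) : e k < d := by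
  have hd := Nat.pos_of_neZero d
  by_contra! h
  have h1 := he.nested (j := k) (k := k - d) (by omega) (by omega)
  have h2 : e (k - d) = e k := by simpa using (he.periodic (k - d)).symm
  omega

namespace HasLeftCode

theorem nested {f : ℤ → ℤ} (h : HasLeftCode f e) ⦃j k : ℤ⦄ (hkj : k < j)
    (hjk : j - e j ≤ k) : j - e j ≤ k - e k := by
  by_contra! hlt
  have h1 : f k < f (j - e j - 1) := (h (by omega)).2 (by omega)
  have h2 : ¬ f j < f (j - e j - 1) := fun hc => by have := (h (by omega)).1 hc; omega
  have h3 : f j < f k := (h hkj).2 hjk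
  omega

theorem avoids312 {π : ℤ ≃ ℤ} (h : HasLeftCode π e) : Avoids312Z π := by
  rintro ⟨i, j, k, hij, hjk, hjk', hki⟩
  exact absurd ((h hjk).2 (by have := (h (hij.trans hjk)).1 hki; omega)) (not_lt.2 hjk'.le)

theorem lt_iff {π : ℤ ≃ ℤ} (h : HasLeftCode π e) (i k : ℤ) :
    π i < π k ↔ i < k ∧ i < k - e k ∨ k < i ∧ i - e i ≤ k := by
  rcases lt_trichotomy i k with hik | rfl | hki
  · have hne : π i ≠ π k := π.injective.ne hik.ne
    rw [← not_iff_not, not_lt, le_iff_lt_or_eq, (h hik), eq_comm]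
    simp only [hne, hik, or_false, true_and]
    omega
  · simp
  · rw [h hki]
    omega

theorem leftCode_eq {π : ℤ ≃ ℤ} (h : HasLeftCode π e) : leftCode π = e := by
  funext k
  refine IsLeast.csInf_eq ⟨?_, fun n hn => ?_⟩
  · have := h.lt_iff (k - e k - 1) k
    simp only [Set.mem_ofPred_eq]
    omega
  · have := h.lt_iff (k - n - 1) k
    simp only [Set.mem_ofPred_eq] at hn
    omega

end HasLeftCode

theorem eq_of_hasLeftCode [NeZero d] {π σ : ℤ ≃ ℤ} (hπ : IsAffinePerm d π)
    (hσ : IsAffinePerm d σ) (hπe : HasLeftCode π e) (hσe : HasLeftCode σ e) : π = σ := by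
  obtain ⟨c, hc⟩ := Int.exists_add_const_of_lt_iff_lt fun i k =>
    (hπe.lt_iff i k).trans (hσe.lt_iff i k).symm
  have hsum : ∑ i ∈ range d, (σ i - i) = ∑ i ∈ range d, (π i - i) + d * c := by
    have hshift : ∀ i, σ i - i = π i - i + c := fun i => by rw [hc]; ring
    simp only [hshift, sum_add_distrib, sum_const, card_range, nsmul_eq_mul]
  rw [hπ.2, hσ.2, zero_add, eq_comm, mul_eq_zero] at hsum
  have hc0 : c = 0 := hsum.resolve_left (by exact_mod_cast NeZero.ne d)
  ext k
  rw [hc, hc0, add_zero]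

section Avoiders

variable {π : ℤ ≃ ℤ}

theorem hasLeftCode_leftCode [NeZero d] (hπ : IsAffinePerm d π) (hav : Avoids312Z π) :
    HasLeftCode π (leftCode π) := by
  intro j k hjk
  have hne : {n : ℕ | π (k - n - 1) < π k}.Nonempty := ⟨d - 1, by
    have hd := Nat.pos_of_neZero d
    have hshift := hπ.1 (k - d)
    rw [sub_add_cancel] at hshift
    show π (k - ((d - 1 : ℕ) : ℤ) - 1) < π k
    rw [show k - ((d - 1 : ℕ) : ℤ) - 1 = k - d by omega]
    omega⟩
  have hmem : π (k - leftCode π k - 1) < π k := Nat.sInf_mem hne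
  constructor
  · intro hlt
    by_contra! hj
    rcases (show j ≤ k - leftCode π k - 1 by omega).eq_or_lt with rfl | hj'
    · exact absurd hmem (not_lt.2 hlt.le)
    · exact hav ⟨j, _, k, hj', by omega, hmem, hlt⟩
  · intro hle
    have hnot := Nat.notMem_of_lt_sInf (s := {n : ℕ | π (k - n - 1) < π k})
      (m := (k - j - 1).toNat) (by unfold leftCode at hle; omega)
    simp only [Set.mem_ofPred_eq, not_lt] at hnot
    rw [show k - ((k - j - 1).toNat : ℤ) - 1 = j by omega] at hnot
    exact lt_of_le_of_ne hnot (π.injective.ne hjk.ne')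

theorem isNestedCode_leftCode [NeZero d] (hπ : IsAffinePerm d π) (hav : Avoids312Z π) :
    IsNestedCode d (leftCode π) where
  periodic k := by
    unfold leftCode
    congr 1
    ext n
    simp only [Set.mem_ofPred_eq]
    rw [show k + d - n - 1 = k - n - 1 + d by ring, hπ.1, hπ.1, add_lt_add_iff_right]
  nested := (hasLeftCode_leftCode hπ hav).nested

end Avoiders

section Construction

noncomputable def coverSet (d : ℕ) (e : ℤ → ℕ) (k : ℤ) : Finset ℤ :=
  (Ioo k (k + d)).filter fun j => j - e j ≤ k

/-- A bijection of `ℤ` with finitely many inversions at `k` satisfies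
`π k - k = #{j > k | π j < π k} - #{j < k | π j > π k}`; for the code `e` the first set is
`coverSet d e k`, which lies in `(k, k + d)` because `e j < d`. -/
noncomputable def codeFun (d : ℕ) (e : ℤ → ℕ) (k : ℤ) : ℤ :=
  k + #(coverSet d e k) - e k

theorem card_coverSet_eq (k : ℤ) :
    #(coverSet d e k) = #((Ioo 0 d).filter fun t : ℕ => t ≤ e (k + t)) := by
  refine card_nbij' (fun j => (j - k).toNat) (fun t => k + t) ?_ ?_ ?_ ?_ <;> intro x hx <;>
    simp only [coverSet, coe_filter, mem_Ioo, Set.mem_ofPred_eq] at hx ⊢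
  · rw [show k + ((x - k).toNat : ℤ) = x by omega]
    omega
  · omega
  · omega
  · omega

variable (he : IsNestedCode d e)
include he

theorem codeFun_lt_of_lt {i k : ℤ} (hk : i < k - e k) : codeFun d e i < codeFun d e k := by
  have hsub : coverSet d e i ⊆ Ioo i (k - e k) ∪ coverSet d e k := by
    intro j hj
    simp only [coverSet, mem_union, mem_filter, mem_Ioo] at hj ⊢
    obtain ⟨⟨hij, hji⟩, hj⟩ := hj
    rcases lt_trichotomy j k with hjk | rfl | hkj
    · have := fun h => he.nested hjk h
      omega
    · omega
    · omega
  have hcard := (card_le_card hsub).trans (card_union_le _ _)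
  rw [Int.card_Ioo] at hcard
  unfold codeFun
  omega

theorem codeFun_add_period (k : ℤ) : codeFun d e (k + d) = codeFun d e k + d := by
  have hcard : #(coverSet d e (k + d)) = #(coverSet d e k) := by
    unfold coverSet
    rw [← map_add_right_Ioo, filter_map, card_map]
    congr 1
    refine filter_congr fun j _ => ?_
    simp only [comp_apply, addRightEmbedding_apply, he.periodic j]
    omega
  simp only [codeFun, hcard, he.periodic k]
  ring

variable [NeZero d]

theorem codeFun_lt_of_le {i k : ℤ} (hik : i < k) (hk : k - e k ≤ i) :
    codeFun d e k < codeFun d e i := by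
  have hsub : insert k (coverSet d e k) ⊆ coverSet d e i := by
    intro j hj
    simp only [coverSet, mem_insert, mem_filter, mem_Ioo] at hj ⊢
    rcases hj with rfl | ⟨⟨hkj, -⟩, hjk⟩
    · have := he.lt j
      omega
    · have := he.nested hkj hjk
      have := he.lt j
      omega
  have hcard := card_le_card hsub
  rw [card_insert_of_notMem (by simp [coverSet])] at hcard
  have := he.nested hik hk
  unfold codeFun
  omega

theorem codeFun_injective : Injective (codeFun d e) := by
  have hne : ∀ ⦃i k⦄, i < k → codeFun d e i ≠ codeFun d e k := fun i k hik => by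
    by_cases hk : k - e k ≤ i
    · exact (codeFun_lt_of_le he hik hk).ne'
    · exact (codeFun_lt_of_lt he (not_le.1 hk)).ne
  intro i k h
  by_contra hik
  rcases lt_or_gt_of_ne hik with hik | hki
  exacts [hne hik h, hne hki h.symm]

theorem sum_card_coverSet : ∑ k ∈ range d, #(coverSet d e k) = ∑ k ∈ range d, e k := by
  have hshift (t : ℕ) : ∑ k ∈ range d, (if t ≤ e (k + t) then 1 else 0) =
      ∑ k ∈ range d, (if t ≤ e k then 1 else 0) := by
    have hg : Periodic (fun k => if t ≤ e k then 1 else 0) d := fun k => by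
      simp only [he.periodic k]
    have h1 := Int.sum_Ico_eq_sum_range (fun k => if t ≤ e k then 1 else 0) t d
    rw [hg.sum_Ico_eq t 0, Int.sum_Ico_eq_sum_range] at h1
    simpa [add_comm] using h1.symm
  calc ∑ k ∈ range d, #(coverSet d e k)
      = ∑ t ∈ Ioo 0 d, ∑ k ∈ range d, if t ≤ e (k + t) then 1 else 0 := by
        simp only [card_coverSet_eq, card_filter]
        exact sum_comm
    _ = ∑ k ∈ range d, #((Ioo 0 d).filter fun t : ℕ => t ≤ e k) := by
        simp only [hshift, card_filter]
        exact sum_comm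
    _ = ∑ k ∈ range d, e k := sum_congr rfl fun k _ => by
        have := he.lt k
        rw [show (Ioo 0 d).filter (fun t : ℕ => t ≤ e k) = Ioc 0 (e k) by ext t; simp; omega]
        simp

noncomputable def codePerm : ℤ ≃ ℤ :=
  Equiv.ofBijective (codeFun d e) ⟨codeFun_injective he,
    Int.surjective_of_injective_of_map_add (codeFun_add_period he) (codeFun_injective he)⟩

theorem hasLeftCode_codePerm : HasLeftCode (codePerm he) e := fun _ _ hik =>
  ⟨fun h => not_lt.1 fun hk => (codeFun_lt_of_lt he hk).not_gt h, codeFun_lt_of_le he hik⟩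

theorem isAffinePerm_codePerm : IsAffinePerm d (codePerm he) := by
  refine ⟨codeFun_add_period he, ?_⟩
  calc ∑ i ∈ range d, (codeFun d e i - i)
      = ∑ i ∈ range d, ((#(coverSet d e i) : ℤ) - e i) :=
        sum_congr rfl fun i _ => by unfold codeFun; ring
    _ = 0 := by
        rw [sum_sub_distrib, sub_eq_zero]
        exact_mod_cast sum_card_coverSet he

end Construction

noncomputable def avoiderEquivNestedCode [NeZero d] :
    {π : ℤ ≃ ℤ // IsAffinePerm d π ∧ Avoids312Z π} ≃
      {e : ℤ → ℕ // IsNestedCode d e} where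
  toFun π := ⟨leftCode π, isNestedCode_leftCode π.2.1 π.2.2⟩
  invFun e := ⟨codePerm e.2, isAffinePerm_codePerm e.2, (hasLeftCode_codePerm e.2).avoids312⟩
  left_inv π := by
    have he := isNestedCode_leftCode π.2.1 π.2.2
    exact Subtype.ext <| eq_of_hasLeftCode (isAffinePerm_codePerm he) π.2.1
      (hasLeftCode_codePerm he) (hasLeftCode_leftCode π.2.1 π.2.2)
  right_inv e := Subtype.ext (hasLeftCode_codePerm e.2).leftCode_eq

section Multiset

noncomputable def countIco (m : Multiset (ZMod d)) (a b : ℤ) : ℕ :=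
  ∑ i ∈ Ico a b, m.count (i : ZMod d)

variable {m : Multiset (ZMod d)}

theorem countIco_add {a b c : ℤ} (hab : a ≤ b) (hbc : b ≤ c) :
    countIco m a b + countIco m b c = countIco m a c :=
  Int.sum_Ico_consecutive _ hab hbc

theorem countIco_add_period (a b : ℤ) : countIco m (a + d) (b + d) = countIco m a b := by
  simp [countIco, ← sum_Ico_add']

theorem countIco_self_add_one (a : ℤ) : countIco m a (a + 1) = m.count (a : ZMod d) := by
  rw [countIco, Ico_add_one_right_eq_Icc, Icc_self, sum_singleton]

noncomputable def startMultiset (d : ℕ) (e : ℤ → ℕ) : Multiset (ZMod d) :=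
  (Ico (0 : ℤ) d).val.map fun k => ((k - e k : ℤ) : ZMod d)

noncomputable def startsAt (d : ℕ) (e : ℤ → ℕ) (j : ℤ) : Finset ℤ :=
  (Ico j (j + d)).filter fun k => k - e k = j

theorem card_startMultiset : Multiset.card (startMultiset d e) = d := by
  simp [startMultiset]

/-- Reading each `i` as opening `m.count i` intervals and each `k` as closing one, the interval
closed at `k` is opened at `k - matchCode m k`, as in parenthesis matching. -/
noncomputable def matchCode (m : Multiset (ZMod d)) (k : ℤ) : ℕ :=
  sInf {t : ℕ | t + 1 ≤ countIco m (k - t) (k + 1)}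

theorem countIco_le_of_lt_matchCode {k : ℤ} {t : ℕ} (ht : t < matchCode m k) :
    countIco m (k - t) (k + 1) ≤ t := by
  have := Nat.notMem_of_lt_sInf ht
  simp only [Set.mem_ofPred_eq, not_le] at this
  omega

variable [NeZero d]

theorem countIco_period (hm : Multiset.card m = d) (a : ℤ) : countIco m a (a + d) = d := by
  rw [countIco, ZMod.sum_Ico_intCast (fun x => m.count x), Multiset.sum_count_eq_card
    fun _ _ => mem_univ _, hm]

section StartMultiset

variable (he : IsNestedCode d e)
include he

theorem count_startMultiset (j : ℤ) :
    (startMultiset d e).count (j : ZMod d) = #(startsAt d e j) := by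
  have hg : Periodic
      (fun k : ℤ => if (j : ZMod d) = ((k - e k : ℤ) : ZMod d) then 1 else 0) d := fun k => by
    simp only [he.periodic k, Int.cast_sub, Int.cast_add, Int.cast_natCast, ZMod.natCast_self,
      add_zero]
  rw [startMultiset, Multiset.count_map, ← filter_val, card_val, card_filter,
    ← zero_add (d : ℤ), hg.sum_Ico_eq 0 j, ← card_filter, startsAt]
  congr 1
  refine filter_congr fun k hk => ?_
  rw [mem_Ico] at hk
  have := he.lt k
  rw [eq_comm, ZMod.intCast_eq_intCast_iff_of_abs_sub_lt (by rw [abs_lt]; omega)]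

theorem mem_biUnion_startsAt {a b x : ℤ} :
    x ∈ (Ico a b).biUnion (startsAt d e) ↔ a ≤ x - e x ∧ x - e x < b := by
  have := he.lt x
  simp only [mem_biUnion, startsAt, mem_filter, mem_Ico]
  constructor
  · rintro ⟨i, hi, -, rfl⟩
    exact hi
  · intro h
    exact ⟨x - e x, h, by omega, rfl⟩

theorem countIco_startMultiset (a b : ℤ) :
    countIco (startMultiset d e) a b = #((Ico a b).biUnion (startsAt d e)) := by
  rw [countIco, card_biUnion]
  · exact sum_congr rfl fun i _ => count_startMultiset he i
  · intro i _ j _ hij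
    refine disjoint_left.2 fun k hki hkj => hij ?_
    simp only [startsAt, mem_filter] at hki hkj
    rw [← hki.2, ← hkj.2]

theorem matchCode_startMultiset : matchCode (startMultiset d e) = e := by
  funext k
  refine IsLeast.csInf_eq ⟨?_, fun t ht => ?_⟩
  · have hsub : Icc (k - e k) k ⊆ (Ico (k - e k) (k + 1)).biUnion (startsAt d e) := by
      intro x hx
      rw [mem_biUnion_startsAt he]
      rw [mem_Icc] at hx
      rcases hx.2.eq_or_lt with rfl | hxk
      · omega
      · have := he.nested hxk hx.1
        omega
    have := card_le_card hsub
    rw [Int.card_Icc] at this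
    simp only [Set.mem_ofPred_eq, countIco_startMultiset he]
    omega
  · by_contra! htk
    have hsub : (Ico (k - t) (k + 1)).biUnion (startsAt d e) ⊆ Ico (k - t) k := fun x hx => by
      rw [mem_biUnion_startsAt he] at hx
      rw [mem_Ico]
      rcases lt_trichotomy x k with hxk | rfl | hkx
      · omega
      · omega
      · have := he.nested hkx (by omega)
        omega
    have := card_le_card hsub
    simp only [Set.mem_ofPred_eq, countIco_startMultiset he] at ht
    rw [Int.card_Ico] at this
    omega

end StartMultiset

section MatchCode

variable (hm : Multiset.card m = d)
include hm

theorem matchCode_spec (k : ℤ) :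
    matchCode m k + 1 ≤ countIco m (k - matchCode m k) (k + 1) := by
  refine Nat.sInf_mem (s := {t : ℕ | t + 1 ≤ countIco m (k - t) (k + 1)}) ⟨d - 1, ?_⟩
  have := Nat.pos_of_neZero d
  simp only [Set.mem_ofPred_eq]
  rw [show k + 1 = k - ((d - 1 : ℕ) : ℤ) + d by omega, countIco_period hm]
  omega

theorem isNestedCode_matchCode : IsNestedCode d (matchCode m) where
  periodic k := by
    unfold matchCode
    congr 1
    ext t
    rw [Set.mem_ofPred_eq, Set.mem_ofPred_eq, show k + d - t = k - t + d by ring,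
      show k + d + 1 = k + 1 + d by ring, countIco_add_period]
  nested j k hkj hjk := by
    have hspec := matchCode_spec hm j
    have hsplit := countIco_add (m := m) (show j - matchCode m j ≤ k + 1 by omega)
      (show k + 1 ≤ j + 1 by omega)
    have htail := countIco_le_of_lt_matchCode (m := m) (k := j) (t := (j - k - 1).toNat) (by omega)
    rw [show j - ((j - k - 1).toNat : ℤ) = k + 1 by omega] at htail
    have : matchCode m k ≤ (k - (j - matchCode m j)).toNat := by
      refine Nat.sInf_le ?_
      simp only [Set.mem_ofPred_eq]
      rw [show k - ((k - (j - matchCode m j)).toNat : ℤ) = j - matchCode m j by omega]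
      omega
    omega

-- The surplus of openings over closings on `[j, k]` strictly decreases along `startsAt j`
-- and stays in `[0, m.count j)`.
theorem card_startsAt_matchCode_le (j : ℤ) :
    #(startsAt d (matchCode m) j) ≤ m.count (j : ZMod d) := by
  set level : ℤ → ℤ := fun k => countIco m j (k + 1) - (k - j + 1)
  have hmem : ∀ k ∈ startsAt d (matchCode m) j, j ≤ k ∧ k - matchCode m k = j := by
    intro k hk
    simp only [startsAt, mem_filter, mem_Ico] at hk
    exact ⟨hk.1.1, hk.2⟩
  have hanti : StrictAntiOn level (startsAt d (matchCode m) j) := by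
    intro k₁ hk₁ k₂ hk₂ hlt
    obtain ⟨-, hk₂⟩ := hmem k₂ hk₂
    have hsplit := countIco_add (m := m) (show j ≤ k₁ + 1 by have := (hmem k₁ hk₁).1; omega)
      (show k₁ + 1 ≤ k₂ + 1 by omega)
    have htail := countIco_le_of_lt_matchCode (m := m) (k := k₂) (t := (k₂ - k₁ - 1).toNat)
      (by have := (hmem k₁ hk₁).1; omega)
    rw [show k₂ - ((k₂ - k₁ - 1).toNat : ℤ) = k₁ + 1 by omega] at htail
    simp only [level]
    omega
  have hmaps :
      Set.MapsTo level (startsAt d (matchCode m) j) (Ico 0 (m.count (j : ZMod d) : ℤ)) := by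
    intro k hk
    obtain ⟨hjk, hk'⟩ := hmem k hk
    have hspec := matchCode_spec hm k
    rw [hk'] at hspec
    have hsplit := countIco_add (m := m) (show j ≤ j + 1 by omega) (show j + 1 ≤ k + 1 by omega)
    rw [countIco_self_add_one] at hsplit
    rcases hjk.eq_or_lt with rfl | hjk
    · rw [countIco_self_add_one] at hspec
      simp only [coe_Ico, Set.mem_Ico, level, countIco_self_add_one]
      omega
    · have htail :=
        countIco_le_of_lt_matchCode (m := m) (k := k) (t := (k - j - 1).toNat) (by omega)
      rw [show k - ((k - j - 1).toNat : ℤ) = j + 1 by omega] at htail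
      simp only [coe_Ico, Set.mem_Ico, level]
      omega
  simpa using card_le_card_of_injOn level hmaps hanti.injOn

theorem startMultiset_matchCode : startMultiset d (matchCode m) = m := by
  refine Multiset.eq_of_le_of_card_le (Multiset.le_iff_count.2 fun x => ?_)
    (by rw [hm, card_startMultiset])
  obtain ⟨j, rfl⟩ := ZMod.intCast_surjective x
  rw [count_startMultiset (isNestedCode_matchCode hm)]
  exact card_startsAt_matchCode_le hm j

end MatchCode

noncomputable def nestedCodeEquivSym :
    {e : ℤ → ℕ // IsNestedCode d e} ≃ Sym (ZMod d) d where
  toFun e := ⟨startMultiset d e.1, card_startMultiset⟩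
  invFun m := ⟨matchCode m.1, isNestedCode_matchCode m.2⟩
  left_inv e := Subtype.ext (matchCode_startMultiset e.2)
  right_inv m := Sym.ext (startMultiset_matchCode m.2)

end Multiset

end Affine312

/-- (Crites) The number of 312-avoiding affine permutations in `S̃_d`
is `binomial (2d-1) d`. -/
theorem card_312_avoiding_affine (d : ℕ) (hd : 1 ≤ d) :
    Nat.card {π : ℤ ≃ ℤ // IsAffinePerm d π ∧ Avoids312Z π} = (2 * d - 1).choose d := by
  have : NeZero d := ⟨by omega⟩
  rw [Nat.card_congr (Affine312.avoiderEquivNestedCode.trans Affine312.nestedCodeEquivSym),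
    Nat.card_eq_fintype_card, Sym.card_sym_eq_choose, ZMod.card]
  congr 1
  omega
end

section
/- Every 312-avoiding affine permutation in the affine symmetric group on d letters has at least one cut point. -/
/-- `j` is a cut point of `π : ℤ → ℤ` if `π i < π k` for all `i ≤ j < k`. -/
def IsCutPointZ (π : ℤ ≃ ℤ) (j : ℤ) : Prop :=
  ∀ i k : ℤ, i ≤ j → j < k → π i < π k

/-!
Suppose `π` had no cut point. At any `b`, some inversion `π k < π a` with `a ≤ b < k` crosses
`b`, and avoiding 312 forces `π k < π b`. So every value of `π` is beaten by a smaller value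
further to the right. But `π i - i` is `d`-periodic, hence bounded below, so the points right of
`0` with value at most `π 0` form a finite set, and its largest element admits no such smaller
value further right.
-/

theorem exists_forall_sub_le_of_apply_add_eq {f : ℤ → ℤ} {d : ℤ} (hd : 0 < d)
    (hf : ∀ i, f (i + d) = f i + d) : ∃ C, ∀ i, i - C ≤ f i := by
  set g : ℤ → ℤ := fun i => f i - i
  have hg : Function.Periodic g d := fun i => by simp only [g, hf]; ring
  obtain ⟨m, hm⟩ : BddBelow (g '' Set.Ico 0 d) := ((Set.finite_Ico 0 d).image g).bddBelow
  refine ⟨-m, fun i => ?_⟩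
  obtain ⟨y, hy, hgy⟩ := hg.exists_mem_Ico₀ hd i
  have : m ≤ g i := hgy ▸ hm (Set.mem_image_of_mem g hy)
  simp only [g] at this
  omega

theorem not_forall_exists_gt_apply_lt_of_sub_le {f : ℤ → ℤ} {C : ℤ} (hC : ∀ i, i - C ≤ f i) :
    ¬ ∀ b, ∃ b' > b, f b' < f b := by
  intro hdesc
  obtain ⟨b, hb, hmax⟩ := Int.exists_greatest_of_bdd (P := fun z => f z ≤ f 0)
    ⟨f 0 + C, fun z hz => by linarith [hC z]⟩ ⟨0, le_rfl⟩
  obtain ⟨b', hbb', hfb'⟩ := hdesc b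
  have := hmax b' (by linarith)
  omega

theorem Avoids312Z.exists_gt_apply_lt_of_not_isCutPointZ {π : ℤ ≃ ℤ} (hπ : Avoids312Z π) {b : ℤ}
    (hb : ¬ IsCutPointZ π b) : ∃ k > b, π k < π b := by
  simp only [IsCutPointZ, not_forall, not_lt] at hb
  obtain ⟨a, k, hab, hbk, hka⟩ := hb
  have hka : π k < π a := hka.lt_of_ne (π.injective.ne (by omega))
  refine ⟨k, hbk, ?_⟩
  rcases hab.lt_or_eq with hab | rfl
  · by_contra! hbk'
    exact hπ ⟨a, b, k, hab, hbk, hbk'.lt_of_ne (π.injective.ne (by omega)), hka⟩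
  · exact hka

/-- Every 312-avoiding affine permutation in `S̃_d` has a cut point. -/
theorem affine_312_avoiding_has_cut_point (d : ℕ) (hd : 1 ≤ d) (π : ℤ ≃ ℤ)
    (h₁ : IsAffinePerm d π) (h₂ : Avoids312Z π) :
    ∃ j : ℤ, IsCutPointZ π j := by
  by_contra! hno
  obtain ⟨C, hC⟩ := exists_forall_sub_le_of_apply_add_eq (by omega) h₁.1
  exact not_forall_exists_gt_apply_lt_of_sub_le hC fun b =>
    h₂.exists_gt_apply_lt_of_not_isCutPointZ (hno b)
end
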